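/- arXiv:2508.00480 — 3 statements merged into one kernel-verified Lean document; each statement's English description precedes it below -/
import Mathlib

section
/- For each graph F there is some d_F such that every graph with average degree at least d_F contains a subgraph which is a subdivision of F. -/
open SimpleGraph

/-- `w` is an internal vertex of the walk `p` (on its support but not an endvertex). -/
def SimpleGraph.Walk.IsInternalVertex {β : Type*} {G : SimpleGraph β} {x y : β}
    (p : G.Walk x y) (w : β) : Prop :=
  w ∈ p.support ∧ w ≠ x ∧ w ≠ y

/-- `F.IsSubdivisionP G lenOK` says that `G` is a subdivision of `F` in which the length of
each subdivision-path satisfies the predicate `lenOK`: there is an injection `f` of the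
vertices of `F` into the vertices of `G` and, for each edge `uv` of `F`, a path of positive
length in `G` from `f u` to `f v`, these paths being pairwise internally vertex-disjoint with
all internal vertices outside the range of `f`, such that every vertex of `G` is in the range
of `f` or on one of the paths, and every edge of `G` is an edge of one of the paths. -/
def SimpleGraph.IsSubdivisionP {α β : Type*} (F : SimpleGraph α) (G : SimpleGraph β)
    (lenOK : ℕ → Prop) : Prop :=
  ∃ (f : α → β) (P : ∀ u v : α, F.Adj u v → G.Walk (f u) (f v)),
    Function.Injective f ∧
    (∀ u v (h : F.Adj u v), (P u v h).IsPath) ∧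
    (∀ u v (h : F.Adj u v), 0 < (P u v h).length ∧ lenOK (P u v h).length) ∧
    (∀ u v (h : F.Adj u v), P v u h.symm = (P u v h).reverse) ∧
    (∀ u v (h : F.Adj u v) (w : β), (P u v h).IsInternalVertex w → w ∉ Set.range f) ∧
    (∀ u v u' v' (h : F.Adj u v) (h' : F.Adj u' v'), s(u, v) ≠ s(u', v') →
      ∀ w : β, (P u v h).IsInternalVertex w → ¬ (P u' v' h').IsInternalVertex w) ∧
    (∀ w : β, w ∈ Set.range f ∨ ∃ u v, ∃ h : F.Adj u v, w ∈ (P u v h).support) ∧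
    (∀ x y : β, G.Adj x y → ∃ u v, ∃ h : F.Adj u v, s(x, y) ∈ (P u v h).edges)

/-- `G` is a subdivision of `F`. -/
def SimpleGraph.IsSubdivision {α β : Type*} (F : SimpleGraph α) (G : SimpleGraph β) : Prop :=
  F.IsSubdivisionP G fun _ => True

/-! ### Auxiliary development -/

/-- Data witnessing that `G` contains a subdivision of `X` (as a not necessarily spanning
structure), with one path chosen for each ordered edge `u < v` of `X`. -/
structure SubdivData {α : Type*} [LinearOrder α] (X : SimpleGraph α) {V : Type*}
    (G : SimpleGraph V) where
  f : α → V
  inj : Function.Injective f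
  Q : ∀ u v : α, u < v → X.Adj u v → G.Walk (f u) (f v)
  isPath : ∀ u v h1 h2, (Q u v h1 h2).IsPath
  pos : ∀ u v h1 h2, 0 < (Q u v h1 h2).length
  notRange : ∀ u v h1 h2 w, w ∈ (Q u v h1 h2).support → w ≠ f u → w ≠ f v →
    w ∉ Set.range f
  disj : ∀ u v u' v' h1 h2 h1' h2', (u, v) ≠ (u', v') → ∀ w : V,
    (w ∈ (Q u v h1 h2).support ∧ w ≠ f u ∧ w ≠ f v) →
    ¬ (w ∈ (Q u' v' h1' h2').support ∧ w ≠ f u' ∧ w ≠ f v')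

namespace Mader

variable {V : Type*} {G : SimpleGraph V}

/-- Lift a walk of `G` whose edges lie in a subgraph `H` to a walk of `H.coe`. -/
def liftWalk (H : G.Subgraph) :
    ∀ {u v : V} (p : G.Walk u v) (_he : ∀ a b, s(a, b) ∈ p.edges → H.Adj a b)
      (hu : u ∈ H.verts) (hv : v ∈ H.verts), H.coe.Walk ⟨u, hu⟩ ⟨v, hv⟩
  | _, _, Walk.nil, _, _, _ => Walk.nil
  | _, _, @Walk.cons _ _ u w v' h p, he, hu, hv =>
      have hadj : H.Adj u w := he u w (by simp [Walk.edges_cons])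
      Walk.cons (show H.coe.Adj ⟨u, hu⟩ ⟨w, hadj.snd_mem⟩ from hadj)
        (liftWalk H p (fun a b hab => he a b (by simp [Walk.edges_cons, hab]))
          hadj.snd_mem hv)

lemma liftWalk_support (H : G.Subgraph) {u v : V} (p : G.Walk u v)
    (he : ∀ a b, s(a, b) ∈ p.edges → H.Adj a b) (hu : u ∈ H.verts) (hv : v ∈ H.verts) :
    (liftWalk H p he hu hv).support.map Subtype.val = p.support := by
  induction p with
  | nil => simp [liftWalk]
  | cons h p ih => simp [liftWalk, ih]

lemma liftWalk_edges (H : G.Subgraph) {u v : V} (p : G.Walk u v)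
    (he : ∀ a b, s(a, b) ∈ p.edges → H.Adj a b) (hu : u ∈ H.verts) (hv : v ∈ H.verts) :
    (liftWalk H p he hu hv).edges.map (Sym2.map Subtype.val) = p.edges := by
  induction p with
  | nil => simp [liftWalk]
  | cons h p ih => simp [liftWalk, ih]

lemma liftWalk_length (H : G.Subgraph) {u v : V} (p : G.Walk u v)
    (he : ∀ a b, s(a, b) ∈ p.edges → H.Adj a b) (hu : u ∈ H.verts) (hv : v ∈ H.verts) :
    (liftWalk H p he hu hv).length = p.length := by
  induction p with
  | nil => simp [liftWalk]
  | cons h p ih => simp [liftWalk, ih]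

lemma liftWalk_isPath (H : G.Subgraph) {u v : V} (p : G.Walk u v)
    (he : ∀ a b, s(a, b) ∈ p.edges → H.Adj a b) (hu : u ∈ H.verts) (hv : v ∈ H.verts)
    (hp : p.IsPath) : (liftWalk H p he hu hv).IsPath := by
  rw [Walk.isPath_def]
  have := liftWalk_support H p he hu hv
  have h2 : (p.support).Nodup := hp.support_nodup
  rw [← this] at h2
  exact h2.of_map _

lemma mem_liftWalk_support (H : G.Subgraph) {u v : V} (p : G.Walk u v)
    (he : ∀ a b, s(a, b) ∈ p.edges → H.Adj a b) (hu : u ∈ H.verts) (hv : v ∈ H.verts)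
    (w : ↥H.verts) : w ∈ (liftWalk H p he hu hv).support ↔ ↑w ∈ p.support := by
  rw [← liftWalk_support H p he hu hv]
  constructor
  · intro hw
    exact List.mem_map_of_mem hw
  · intro hw
    obtain ⟨w', hw', hval⟩ := List.mem_map.mp hw
    exact Subtype.ext hval ▸ hw'

lemma mem_liftWalk_edges (H : G.Subgraph) {u v : V} (p : G.Walk u v)
    (he : ∀ a b, s(a, b) ∈ p.edges → H.Adj a b) (hu : u ∈ H.verts) (hv : v ∈ H.verts)
    (a b : ↥H.verts) :
    s(a, b) ∈ (liftWalk H p he hu hv).edges ↔ s((a : V), (b : V)) ∈ p.edges := by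
  rw [← liftWalk_edges H p he hu hv]
  constructor
  · intro hw
    have := List.mem_map_of_mem (f := Sym2.map Subtype.val) hw
    simpa using this
  · intro hw
    obtain ⟨e', he', hval⟩ := List.mem_map.mp hw
    have : e' = s(a, b) := by
      apply Sym2.map.injective Subtype.val_injective
      rw [hval]
      simp
    exact this ▸ he'

/-- Conversion: subdivision data yields a subgraph which is a subdivision. -/
theorem isSubdivision_of_subdivData {α : Type*} [LinearOrder α] (X : SimpleGraph α)
    (D : SubdivData X G) : ∃ H : G.Subgraph, X.IsSubdivision H.coe := by
  classical
  let Hverts : Set V := Set.range D.f ∪ ⋃ (u) (v) (h1 : u < v) (h2 : X.Adj u v),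
      {z | z ∈ (D.Q u v h1 h2).support}
  have hsupp_sub : ∀ u v (h1 : u < v) (h2 : X.Adj u v), ∀ z ∈ (D.Q u v h1 h2).support,
      z ∈ Hverts := by
    intro u v h1 h2 z hz
    exact Or.inr (Set.mem_iUnion.mpr ⟨u, Set.mem_iUnion.mpr ⟨v,
      Set.mem_iUnion.mpr ⟨h1, Set.mem_iUnion.mpr ⟨h2, hz⟩⟩⟩⟩)
  have hf_mem : ∀ a, D.f a ∈ Hverts := fun a => Or.inl ⟨a, rfl⟩
  let H : G.Subgraph :=
    { verts := Hverts
      Adj := fun a b => ∃ u v, ∃ (h1 : u < v) (h2 : X.Adj u v),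
        s(a, b) ∈ (D.Q u v h1 h2).edges
      adj_sub := by
        rintro a b ⟨u, v, h1, h2, he⟩
        exact (D.Q u v h1 h2).edges_subset_edgeSet he
      edge_vert := by
        rintro a b ⟨u, v, h1, h2, he⟩
        exact hsupp_sub u v h1 h2 a (Walk.fst_mem_support_of_mem_edges _ he)
      symm := by
        refine ⟨?_⟩
        rintro a b ⟨u, v, h1, h2, he⟩
        exact ⟨u, v, h1, h2, Sym2.eq_swap ▸ he⟩ }
  refine ⟨H, ?_⟩
  let fC : α → ↥H.verts := fun a => ⟨D.f a, hf_mem a⟩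
  have fCinj : Function.Injective fC := fun a b hab => D.inj (congrArg Subtype.val hab)
  let QC : ∀ u v, u < v → ∀ h2 : X.Adj u v, H.coe.Walk (fC u) (fC v) :=
    fun u v h1 h2 => liftWalk H (D.Q u v h1 h2)
      (fun a b hab => ⟨u, v, h1, h2, hab⟩)
      (hsupp_sub u v h1 h2 _ (Walk.start_mem_support _))
      (hsupp_sub u v h1 h2 _ (Walk.end_mem_support _))
  have memQC : ∀ u v h1 h2 (w : ↥H.verts),
      w ∈ (QC u v h1 h2).support ↔ ↑w ∈ (D.Q u v h1 h2).support :=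
    fun u v h1 h2 w => mem_liftWalk_support H (D.Q u v h1 h2) _ _ _ w
  have edgeQC : ∀ u v h1 h2 (a b : ↥H.verts),
      s(a, b) ∈ (QC u v h1 h2).edges ↔ s((a : V), (b : V)) ∈ (D.Q u v h1 h2).edges :=
    fun u v h1 h2 a b => mem_liftWalk_edges H (D.Q u v h1 h2) _ _ _ a b
  have lenQC : ∀ u v h1 h2, (QC u v h1 h2).length = (D.Q u v h1 h2).length :=
    fun u v h1 h2 => liftWalk_length H (D.Q u v h1 h2) _ _ _
  have pathQC : ∀ u v h1 h2, (QC u v h1 h2).IsPath :=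
    fun u v h1 h2 => liftWalk_isPath H (D.Q u v h1 h2) _ _ _ (D.isPath u v h1 h2)
  have hvu : ∀ {u v : α}, X.Adj u v → ¬ u < v → v < u :=
    fun h hlt => h.ne.lt_or_gt.resolve_left hlt
  let P : ∀ u v : α, X.Adj u v → H.coe.Walk (fC u) (fC v) := fun u v h =>
    if hlt : u < v then QC u v hlt h else (QC v u (hvu h hlt) h.symm).reverse
  have hP_pos : ∀ u v (h1 : u < v) (h2 : X.Adj u v), P u v h2 = QC u v h1 h2 := by
    intro u v h1 h2
    simp only [P]
    rw [dif_pos h1]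
  have hP_neg : ∀ u v (h2 : X.Adj u v) (h1 : v < u),
      P u v h2 = (QC v u h1 h2.symm).reverse := by
    intro u v h2 h1
    have hn : ¬ u < v := lt_asymm h1
    simp only [P]
    rw [dif_neg hn]
  have cond4 : ∀ u v (h : X.Adj u v), P v u h.symm = (P u v h).reverse := by
    intro u v h
    rcases h.ne.lt_or_gt with h1 | h1
    · rw [hP_pos u v h1 h, hP_neg v u h.symm h1]
    · rw [hP_pos v u h1 h.symm, hP_neg u v h h1, Walk.reverse_reverse]
  have hint : ∀ u v (h1 : u < v) (h2 : X.Adj u v) (w : ↥H.verts),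
      (P u v h2).IsInternalVertex w ↔
        (↑w ∈ (D.Q u v h1 h2).support ∧ ↑w ≠ D.f u ∧ ↑w ≠ D.f v) := by
    intro u v h1 h2 w
    rw [hP_pos u v h1 h2]
    unfold Walk.IsInternalVertex
    rw [memQC u v h1 h2 w]
    refine and_congr Iff.rfl (and_congr ?_ ?_) <;>
    · constructor
      · intro hne heq
        exact hne (Subtype.ext heq)
      · intro hne heq
        exact hne (congrArg Subtype.val heq)
  have hswap : ∀ u v (h2 : X.Adj u v) (w : ↥H.verts),
      (P v u h2.symm).IsInternalVertex w ↔ (P u v h2).IsInternalVertex w := by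
    intro u v h2 w
    rw [cond4 u v h2]
    unfold Walk.IsInternalVertex
    rw [Walk.support_reverse, List.mem_reverse]
    tauto
  refine ⟨fC, P, fCinj, ?_, ?_, cond4, ?_, ?_, ?_, ?_⟩
  · -- paths
    intro u v h
    rcases h.ne.lt_or_gt with h1 | h1
    · rw [hP_pos u v h1 h]
      exact pathQC u v h1 h
    · rw [hP_neg u v h h1]
      exact (pathQC v u h1 h.symm).reverse
  · -- lengths
    intro u v h
    refine ⟨?_, trivial⟩
    rcases h.ne.lt_or_gt with h1 | h1
    · rw [hP_pos u v h1 h, lenQC u v h1 h]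
      exact D.pos u v h1 h
    · rw [hP_neg u v h h1, Walk.length_reverse, lenQC v u h1 h.symm]
      exact D.pos v u h1 h.symm
  · -- internal vertices not in range
    have h5 : ∀ u v (h1 : u < v) (h2 : X.Adj u v) (w : ↥H.verts),
        (P u v h2).IsInternalVertex w → (w : V) ∉ Set.range D.f := by
      intro u v h1 h2 w hw
      obtain ⟨hs, h1', h2'⟩ := (hint u v h1 h2 w).mp hw
      exact D.notRange u v h1 h2 ↑w hs h1' h2'
    intro u v h w hw hrange
    obtain ⟨a, ha⟩ := hrange
    rcases h.ne.lt_or_gt with h1 | h1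
    · exact h5 u v h1 h w hw ⟨a, congrArg Subtype.val ha⟩
    · exact h5 v u h1 h.symm w ((hswap v u h.symm w).mp hw) ⟨a, congrArg Subtype.val ha⟩
  · -- pairwise internally disjoint
    have h6 : ∀ u v u' v' (h1 : u < v) (h2 : X.Adj u v) (h1' : u' < v') (h2' : X.Adj u' v'),
        (u, v) ≠ (u', v') → ∀ w : ↥H.verts, (P u v h2).IsInternalVertex w →
          ¬ (P u' v' h2').IsInternalVertex w := by
      intro u v u' v' h1 h2 h1' h2' hne w hw hw'
      exact D.disj u v u' v' h1 h2 h1' h2' hne ↑w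
        ((hint u v h1 h2 w).mp hw) ((hint u' v' h1' h2' w).mp hw')
    intro u v u' v' h h' hne w hw hw'
    rcases h.ne.lt_or_gt with h1 | h1 <;> rcases h'.ne.lt_or_gt with h1' | h1'
    · refine h6 u v u' v' h1 h h1' h' ?_ w hw hw'
      intro heq
      rw [Prod.mk.injEq] at heq
      exact hne (by rw [heq.1, heq.2])
    · refine h6 u v v' u' h1 h h1' h'.symm ?_ w hw ((hswap v' u' h'.symm w).mp hw')
      intro heq
      rw [Prod.mk.injEq] at heq
      exact hne (by rw [heq.1, heq.2, Sym2.eq_swap])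
    · refine h6 v u u' v' h1 h.symm h1' h' ?_ w ((hswap v u h.symm w).mp hw) hw'
      intro heq
      rw [Prod.mk.injEq] at heq
      exact hne (by rw [← heq.1, ← heq.2, Sym2.eq_swap])
    · refine h6 v u v' u' h1 h.symm h1' h'.symm ?_ w ((hswap v u h.symm w).mp hw)
        ((hswap v' u' h'.symm w).mp hw')
      intro heq
      rw [Prod.mk.injEq] at heq
      exact hne (by rw [heq.1, heq.2])
  · -- cover
    intro w
    rcases w.2 with hw | hw
    · obtain ⟨a, ha⟩ := hw
      exact Or.inl ⟨a, Subtype.ext ha⟩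
    · simp only [Set.mem_iUnion] at hw
      obtain ⟨u, v, h1, h2, hz⟩ := hw
      refine Or.inr ⟨u, v, h2, ?_⟩
      rw [hP_pos u v h1 h2]
      exact (memQC u v h1 h2 w).mpr hz
  · -- edges
    intro a b hab
    obtain ⟨u, v, h1, h2, he⟩ := hab
    refine ⟨u, v, h2, ?_⟩
    rw [hP_pos u v h1 h2]
    exact (edgeQC u v h1 h2 a b).mpr he

/-- Mapping subdivision data along a graph embedding. -/
theorem subdivData_map {α : Type*} [LinearOrder α] (X : SimpleGraph α)
    {W : Type*} {G' : SimpleGraph W} (φ : G' ↪g G) (D : SubdivData X G') :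
    ∃ D' : SubdivData X G, (∀ a, D'.f a = φ (D.f a)) ∧
      (∀ u v h1 h2 z, z ∈ (D'.Q u v h1 h2).support →
        ∃ z0, z = φ z0 ∧ z0 ∈ (D.Q u v h1 h2).support) := by
  refine ⟨⟨φ ∘ D.f, φ.injective.comp D.inj,
    fun u v h1 h2 => (D.Q u v h1 h2).map φ.toHom, ?_, ?_, ?_, ?_⟩, fun a => rfl, ?_⟩
  · intro u v h1 h2
    exact Walk.map_isPath_of_injective φ.injective (D.isPath u v h1 h2)
  · intro u v h1 h2
    rw [Walk.length_map]; exact D.pos u v h1 h2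
  · intro u v h1 h2 w hw hwu hwv hrange
    rw [Walk.support_map, List.mem_map] at hw
    obtain ⟨z, hz, rfl⟩ := hw
    obtain ⟨a, ha⟩ := hrange
    exact D.notRange u v h1 h2 z hz (fun h => hwu (congrArg φ h))
      (fun h => hwv (congrArg φ h)) ⟨a, φ.injective ha⟩
  · intro u v u' v' h1 h2 h1' h2' hne w hw hw'
    obtain ⟨hw1, hw2, hw3⟩ := hw
    obtain ⟨hw1', hw2', hw3'⟩ := hw'
    rw [Walk.support_map, List.mem_map] at hw1 hw1'
    obtain ⟨z, hz, rfl⟩ := hw1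
    obtain ⟨z', hz', hzz⟩ := hw1'
    have hz'' : z' = z := φ.injective hzz
    rw [hz''] at hz'
    exact D.disj u v u' v' h1 h2 h1' h2' hne z
      ⟨hz, fun h => hw2 (congrArg φ h), fun h => hw3 (congrArg φ h)⟩
      ⟨hz', fun h => hw2' (congrArg φ h), fun h => hw3' (congrArg φ h)⟩
  · intro u v h1 h2 z hz
    rw [Walk.support_map, List.mem_map] at hz
    obtain ⟨z0, hz0, rfl⟩ := hz
    exact ⟨z0, rfl, hz0⟩

/-- Base case : a graph with no edges. -/
theorem subdivData_base {α : Type*} [Fintype α] [LinearOrder α] [Fintype V]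
    (X : SimpleGraph α) (hX : X.edgeSet = ∅) (hcard : Fintype.card α ≤ Fintype.card V)
    (G : SimpleGraph V) : Nonempty (SubdivData X G) := by
  obtain ⟨f⟩ := Function.Embedding.nonempty_iff_card_le.mpr hcard
  have hadj : ∀ u v : α, ¬ X.Adj u v := by
    intro u v h
    have : s(u, v) ∈ X.edgeSet := h
    rw [hX] at this
    exact this
  exact ⟨⟨f, f.injective, fun u v _ h2 => absurd h2 (hadj u v),
    fun u v h1 h2 => absurd h2 (hadj u v), fun u v h1 h2 => absurd h2 (hadj u v),
    fun u v h1 h2 => absurd h2 (hadj u v), fun u v u' v' h1 h2 => absurd h2 (hadj u v)⟩⟩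

/-- Extension: add one subdivided edge routed through a connected set `U` which is
disjoint from the set `NUs` carrying the current subdivision data. -/
theorem subdivData_extend {α : Type*} [LinearOrder α] [DecidableEq V] (X : SimpleGraph α)
    {x y : α} (hlt : x < y) (hxy : X.Adj x y)
    (U NUs : Set V) (hdisj : ∀ z ∈ NUs, z ∉ U)
    (hconn : ∀ a ∈ U, ∀ b ∈ U, ∃ w : G.Walk a b, ∀ z ∈ w.support, z ∈ U)
    (D : SubdivData (X.deleteEdges {s(x, y)}) G)
    (hrange : ∀ a, D.f a ∈ NUs)
    (hsupp : ∀ u v h1 h2, ∀ z ∈ (D.Q u v h1 h2).support, z ∈ NUs)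
    (ha : ∃ u ∈ U, G.Adj u (D.f x)) (hb : ∃ u ∈ U, G.Adj u (D.f y)) :
    Nonempty (SubdivData X G) := by
  classical
  obtain ⟨u1, hu1, ha1⟩ := ha
  obtain ⟨u2, hu2, hb1⟩ := hb
  obtain ⟨wU, hwU⟩ := hconn u1 hu1 u2 hu2
  set W0 : G.Walk (D.f x) (D.f y) := Walk.cons ha1.symm (wU.concat hb1) with hW0
  set np : G.Walk (D.f x) (D.f y) := W0.toPath.1 with hnp
  have hnp_path : np.IsPath := W0.toPath.2
  have hnp_mem : ∀ z ∈ np.support, z = D.f x ∨ z = D.f y ∨ z ∈ U := by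
    intro z hz
    have hz' : z ∈ W0.support := Walk.support_toPath_subset _ hz
    rw [hW0, Walk.support_cons, Walk.support_concat] at hz'
    rcases List.mem_cons.mp hz' with h | h
    · exact Or.inl h
    · rw [List.mem_append] at h
      rcases h with h | h
      · exact Or.inr (Or.inr (hwU z h))
      · exact Or.inr (Or.inl (List.mem_singleton.mp h))
  have hxyne : x ≠ y := ne_of_lt hlt
  have hfxy : D.f x ≠ D.f y := fun h => hxyne (D.inj h)
  have hnp_len : 0 < np.length :=
    Nat.pos_of_ne_zero fun h0 => hfxy (Walk.eq_of_length_eq_zero h0)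
  have hnew_int : ∀ w, w ∈ np.support → w ≠ D.f x → w ≠ D.f y → w ∈ U := by
    intro w hw h1 h2
    rcases hnp_mem w hw with h | h | h
    · exact absurd h h1
    · exact absurd h h2
    · exact h
  have hX' : ∀ u v, u < v → X.Adj u v → ¬(u = x ∧ v = y) →
      (X.deleteEdges {s(x, y)}).Adj u v := by
    intro u v h1 h2 h
    rw [deleteEdges_adj]
    refine ⟨h2, ?_⟩
    intro hmem
    rw [Set.mem_singleton_iff] at hmem
    rcases Sym2.eq_iff.mp hmem with ⟨hu, hv⟩ | ⟨hu, hv⟩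
    · exact h ⟨hu, hv⟩
    · subst hu; subst hv; exact absurd h1 (lt_asymm hlt)
  refine ⟨⟨D.f, D.inj, fun u v h1 h2 =>
    if h : u = x ∧ v = y then
      np.copy (congrArg D.f h.1).symm (congrArg D.f h.2).symm
    else D.Q u v h1 (hX' u v h1 h2 h), ?_, ?_, ?_, ?_⟩⟩
  · intro u v h1 h2
    by_cases h : u = x ∧ v = y
    · rw [dif_pos h, Walk.isPath_copy]
      exact hnp_path
    · rw [dif_neg h]
      exact D.isPath u v h1 _
  · intro u v h1 h2
    by_cases h : u = x ∧ v = y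
    · rw [dif_pos h, Walk.length_copy]
      exact hnp_len
    · rw [dif_neg h]
      exact D.pos u v h1 _
  · intro u v h1 h2 w hw hwu hwv hr
    obtain ⟨a, hra⟩ := hr
    by_cases h : u = x ∧ v = y
    · rw [dif_pos h, Walk.support_copy] at hw
      obtain ⟨rfl, rfl⟩ := h
      have hwU' : w ∈ U := hnew_int w hw hwu hwv
      exact hdisj _ (hra ▸ hrange a) hwU'
    · rw [dif_neg h] at hw
      exact D.notRange u v h1 _ w hw hwu hwv ⟨a, hra⟩
  · intro u v u' v' h1 h2 h1' h2' hne w hw hw'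
    by_cases h : u = x ∧ v = y <;> by_cases h' : u' = x ∧ v' = y
    · exact hne (by rw [h.1, h.2, h'.1, h'.2])
    · rw [dif_pos h, Walk.support_copy] at hw
      rw [dif_neg h'] at hw'
      obtain ⟨hws, hw1, hw2⟩ := hw
      have hwU' : w ∈ U := hnew_int w hws (h.1 ▸ hw1) (h.2 ▸ hw2)
      exact hdisj _ (hsupp u' v' h1' _ w hw'.1) hwU'
    · rw [dif_pos h', Walk.support_copy] at hw'
      rw [dif_neg h] at hw
      obtain ⟨hws, hw1, hw2⟩ := hw'
      have hwU' : w ∈ U := hnew_int w hws (h'.1 ▸ hw1) (h'.2 ▸ hw2)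
      exact hdisj _ (hsupp u v h1 _ w hw.1) hwU'
    · rw [dif_neg h] at hw
      rw [dif_neg h'] at hw'
      exact D.disj u v u' v' h1 _ h1' _ hne w hw hw' 

/-- Master counting lemma: edges all of whose vertices lie in `s` and containing `v ∈ s`
biject with neighbours of `v` inside `s`. -/
lemma card_edges_at [Fintype V] [DecidableEq V] (G : SimpleGraph V) [DecidableRel G.Adj]
    (v : V) (s : Finset V) (hv : v ∈ s) :
    (G.edgeFinset.filter fun e => v ∈ e ∧ ∀ x ∈ e, x ∈ s).card
      = (G.neighborFinset v ∩ s).card := by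
  refine (Finset.card_bij (fun w _ => s(v, w)) ?_ ?_ ?_).symm
  · intro w hw
    simp only [Finset.mem_inter, mem_neighborFinset] at hw
    simp only [Finset.mem_filter, mem_edgeFinset, mem_edgeSet]
    refine ⟨hw.1, Sym2.mem_mk_left _ _, ?_⟩
    intro x hx
    rcases Sym2.mem_iff.mp hx with rfl | rfl
    · exact hv
    · exact hw.2
  · intro w hw w' hw' hee
    simp only [Finset.mem_inter, mem_neighborFinset] at hw hw'
    rcases Sym2.eq_iff.mp hee with ⟨-, h⟩ | ⟨h1, h2⟩
    · exact h
    · exact absurd (h1 ▸ hw'.1) G.irrefl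
  · intro e he
    simp only [Finset.mem_filter, mem_edgeFinset] at he
    obtain ⟨he1, he2, he3⟩ := he
    obtain ⟨w, rfl⟩ := Sym2.mem_iff_exists.mp he2
    refine ⟨w, ?_, rfl⟩
    simp only [Finset.mem_inter, mem_neighborFinset]
    exact ⟨(mem_edgeSet G).mp he1, he3 w (Sym2.mem_mk_right _ _)⟩

/-- Double counting: the sum over `v ∈ U` of the number of `E`-edges containing `v`. -/
lemma sum_card_filter_mem [Fintype V] [DecidableEq V] (U : Finset V) (E : Finset (Sym2 V)) :
    ∑ v ∈ U, (E.filter fun e => v ∈ e).card = ∑ e ∈ E, (U.filter fun v => v ∈ e).card := by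
  simp only [Finset.card_filter]
  exact Finset.sum_comm

/-- The key expansion lemma: a graph of minimum degree `2t` has a nonempty connected
set `U` whose neighbourhood `NU` has everywhere at least `t` neighbours inside itself. -/
theorem exists_expanding_nbhd [Fintype V] [Nonempty V] [DecidableEq V]
    (G : SimpleGraph V) [DecidableRel G.Adj] (t : ℕ) (ht : 1 ≤ t)
    (hdeg : ∀ v, 2 * t ≤ G.degree v) :
    ∃ U NU : Finset V,
      (∀ w, w ∈ NU ↔ (w ∉ U ∧ ∃ u ∈ U, G.Adj u w)) ∧
      (∀ a ∈ U, ∀ b ∈ U, ∃ p : G.Walk a b, ∀ z ∈ p.support, z ∈ U) ∧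
      NU.Nonempty ∧
      (∀ v ∈ NU, t ≤ (G.neighborFinset v ∩ NU).card) := by
  classical
  set eM : Finset V → ℕ := fun A => (G.edgeFinset.filter fun e => ∃ x ∈ e, x ∈ A).card
    with heM
  set nb : Finset V → Finset V :=
    fun A => Finset.univ.filter fun w => w ∉ A ∧ ∃ u ∈ A, G.Adj u w with hnb
  have hnb_mem : ∀ A w, w ∈ nb A ↔ (w ∉ A ∧ ∃ u ∈ A, G.Adj u w) := by
    intro A w
    rw [hnb]
    simp
  set connP : Finset V → Prop :=
    fun A => ∀ a ∈ A, ∀ b ∈ A, ∃ p : G.Walk a b, ∀ z ∈ p.support, z ∈ A with hconnP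
  set Φ : Finset V → Prop :=
    fun A => A.Nonempty ∧ connP A ∧ eM A + t ≤ (nb A).card + t * A.card with hΦ
  obtain ⟨v0⟩ := (inferInstance : Nonempty V)
  have hsingle : Φ {v0} := by
    refine ⟨⟨v0, Finset.mem_singleton_self v0⟩, ?_, ?_⟩
    · intro a ha b hb
      rw [Finset.mem_singleton] at ha hb
      subst ha; subst hb
      exact ⟨Walk.nil, by simp⟩
    · have h1 : eM {v0} = G.degree v0 := by
        have heq : (G.edgeFinset.filter fun e => ∃ x ∈ e, x ∈ ({v0} : Finset V))
            = G.edgeFinset.filter fun e => v0 ∈ e ∧ ∀ x ∈ e, x ∈ (Finset.univ : Finset V) := by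
          apply Finset.filter_congr
          intro e he
          constructor
          · rintro ⟨x, hx, hxv⟩
            rw [Finset.mem_singleton] at hxv
            exact ⟨hxv ▸ hx, fun y _ => Finset.mem_univ y⟩
          · rintro ⟨hx, -⟩
            exact ⟨v0, hx, Finset.mem_singleton_self v0⟩
        rw [heM]
        dsimp only
        rw [heq, card_edges_at G v0 Finset.univ (Finset.mem_univ v0), Finset.inter_univ]
        rfl
      have h2 : nb {v0} = G.neighborFinset v0 := by
        ext w
        rw [hnb_mem]
        simp only [Finset.mem_singleton, mem_neighborFinset]
        constructor
        · rintro ⟨hne, u, rfl, hadj⟩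
          exact hadj
        · intro hadj
          exact ⟨fun h => G.irrefl (h ▸ hadj), v0, rfl, hadj⟩
      rw [h1, h2, Finset.card_singleton, Nat.mul_one]
      have hnc : (G.neighborFinset v0).card = G.degree v0 := rfl
      omega
  obtain ⟨U, hUmem, hUmax⟩ := Finset.exists_max_image
    (Finset.univ.powerset.filter fun A => Φ A) Finset.card
    ⟨{v0}, by
      rw [Finset.mem_filter]
      exact ⟨Finset.mem_powerset.mpr (Finset.subset_univ _), hsingle⟩⟩
  rw [Finset.mem_filter] at hUmem
  obtain ⟨-, hUne, hUconn, hUineq⟩ := hUmem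
  have hexp : ∀ v ∈ nb U, t ≤ (G.neighborFinset v ∩ nb U).card := by
    intro v hv
    obtain ⟨hvU, u0, hu0U, hu0adj⟩ := (hnb_mem U v).mp hv
    set U' := insert v U with hU'
    have hcardU' : U'.card = U.card + 1 := Finset.card_insert_of_notMem hvU
    have hconnU' : connP U' := by
      have wv : ∀ c ∈ U, ∃ p : G.Walk v c, ∀ z ∈ p.support, z ∈ U' := by
        intro c hc
        obtain ⟨p0, hp0⟩ := hUconn u0 hu0U c hc
        refine ⟨Walk.cons hu0adj.symm p0, ?_⟩
        intro z hz
        rw [Walk.support_cons, List.mem_cons] at hz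
        rcases hz with rfl | hz
        · exact Finset.mem_insert_self _ _
        · exact Finset.mem_insert_of_mem (hp0 z hz)
      intro a ha b hb
      rcases Finset.mem_insert.mp ha with rfl | ha' <;>
        rcases Finset.mem_insert.mp hb with rfl | hb'
      · refine ⟨Walk.nil, ?_⟩
        intro z hz
        rw [Walk.support_nil, List.mem_singleton] at hz
        exact hz ▸ Finset.mem_insert_self _ _
      · exact wv b hb'
      · obtain ⟨p, hp⟩ := wv a ha'
        exact ⟨p.reverse, fun z hz =>
          hp z (by rwa [Walk.support_reverse, List.mem_reverse] at hz)⟩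
      · obtain ⟨p, hp⟩ := hUconn a ha' b hb'
        exact ⟨p, fun z hz => Finset.mem_insert_of_mem (hp z hz)⟩
    have hnotΦ : ¬ Φ U' := by
      intro hΦ'
      have := hUmax U' (by
        rw [Finset.mem_filter]
        exact ⟨Finset.mem_powerset.mpr (Finset.subset_univ _), hΦ'⟩)
      omega
    have hfail : (nb U').card + t * U'.card < eM U' + t := by
      by_contra hcon
      push_neg at hcon
      exact hnotΦ ⟨⟨v, Finset.mem_insert_self _ _⟩, hconnU', hcon⟩
    have hi : eM U' = eM U + (G.neighborFinset v \ U).card := by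
      have hpart : (G.edgeFinset.filter fun e => ∃ x ∈ e, x ∈ U')
          = (G.edgeFinset.filter fun e => ∃ x ∈ e, x ∈ U)
            ∪ (G.edgeFinset.filter fun e => v ∈ e ∧ ∀ x ∈ e, x ∈ Uᶜ) := by
        ext e
        simp only [Finset.mem_filter, Finset.mem_union, Finset.mem_compl]
        constructor
        · rintro ⟨he, x, hxe, hxU'⟩
          by_cases hm : ∃ x ∈ e, x ∈ U
          · exact Or.inl ⟨he, hm⟩
          · push_neg at hm
            rcases Finset.mem_insert.mp hxU' with rfl | hxU
            · exact Or.inr ⟨he, hxe, fun y hy => hm y hy⟩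
            · exact absurd hxU (hm x hxe)
        · rintro (⟨he, x, hxe, hxU⟩ | ⟨he, hve, -⟩)
          · exact ⟨he, x, hxe, Finset.mem_insert_of_mem hxU⟩
          · exact ⟨he, v, hve, Finset.mem_insert_self _ _⟩
      have hdisj2 : Disjoint (G.edgeFinset.filter fun e => ∃ x ∈ e, x ∈ U)
          (G.edgeFinset.filter fun e => v ∈ e ∧ ∀ x ∈ e, x ∈ Uᶜ) := by
        rw [Finset.disjoint_left]
        intro e he1 he2
        rw [Finset.mem_filter] at he1 he2
        obtain ⟨-, x, hxe, hxU⟩ := he1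
        exact Finset.mem_compl.mp (he2.2.2 x hxe) hxU
      rw [heM]
      dsimp only
      rw [hpart, Finset.card_union_of_disjoint hdisj2,
        card_edges_at G v Uᶜ (Finset.mem_compl.mpr hvU), Finset.sdiff_eq_inter_compl]
    have hii : (G.neighborFinset v \ U).card
        = (G.neighborFinset v ∩ nb U).card + (G.neighborFinset v \ (U ∪ nb U)).card := by
      have hsplit2 : G.neighborFinset v \ U
          = (G.neighborFinset v ∩ nb U) ∪ (G.neighborFinset v \ (U ∪ nb U)) := by
        ext w
        simp only [Finset.mem_sdiff, Finset.mem_inter, Finset.mem_union]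
        constructor
        · rintro ⟨hwN, hwU⟩
          by_cases hwnb : w ∈ nb U
          · exact Or.inl ⟨hwN, hwnb⟩
          · exact Or.inr ⟨hwN, fun h => h.elim hwU hwnb⟩
        · rintro (⟨hwN, hwnb⟩ | ⟨hwN, hw⟩)
          · exact ⟨hwN, ((hnb_mem U w).mp hwnb).1⟩
          · exact ⟨hwN, fun h => hw (Or.inl h)⟩
      have hdisj3 : Disjoint (G.neighborFinset v ∩ nb U)
          (G.neighborFinset v \ (U ∪ nb U)) := by
        rw [Finset.disjoint_left]
        intro w hw1 hw2
        rw [Finset.mem_inter] at hw1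
        rw [Finset.mem_sdiff] at hw2
        exact hw2.2 (Finset.mem_union_right _ hw1.2)
      rw [hsplit2, Finset.card_union_of_disjoint hdisj3]
    have hiii : (nb U).card + (G.neighborFinset v \ (U ∪ nb U)).card ≤ (nb U').card + 1 := by
      have hsub : ((nb U).erase v) ∪ (G.neighborFinset v \ (U ∪ nb U)) ⊆ nb U' := by
        intro w hw
        rcases Finset.mem_union.mp hw with hw | hw
        · rw [Finset.mem_erase] at hw
          obtain ⟨hwv, hwnb⟩ := hw
          obtain ⟨hwU, u, huU, huadj⟩ := (hnb_mem U w).mp hwnb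
          refine (hnb_mem U' w).mpr ⟨?_, u, Finset.mem_insert_of_mem huU, huadj⟩
          intro hwU'
          rcases Finset.mem_insert.mp hwU' with rfl | h
          · exact hwv rfl
          · exact hwU h
        · rw [Finset.mem_sdiff] at hw
          obtain ⟨hwN, hwn⟩ := hw
          have hadj : G.Adj v w := (mem_neighborFinset G v w).mp hwN
          refine (hnb_mem U' w).mpr ⟨?_, v, Finset.mem_insert_self _ _, hadj⟩
          intro hwU'
          rcases Finset.mem_insert.mp hwU' with rfl | h
          · exact G.irrefl hadj
          · exact hwn (Finset.mem_union_left _ h)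
      have hdisj4 : Disjoint ((nb U).erase v) (G.neighborFinset v \ (U ∪ nb U)) := by
        rw [Finset.disjoint_left]
        intro w hw1 hw2
        rw [Finset.mem_sdiff] at hw2
        exact hw2.2 (Finset.mem_union_right _ (Finset.mem_of_mem_erase hw1))
      have hcard := Finset.card_le_card hsub
      rw [Finset.card_union_of_disjoint hdisj4, Finset.card_erase_of_mem hv] at hcard
      have hnu1 : 1 ≤ (nb U).card := Finset.card_pos.mpr ⟨v, hv⟩
      omega
    rw [hcardU', Nat.mul_succ] at hfail
    omega
  have hNUne : (nb U).Nonempty := by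
    rw [Finset.nonempty_iff_ne_empty]
    intro hempty
    have hNsub : ∀ v ∈ U, G.neighborFinset v ⊆ U := by
      intro v hvU w hw
      by_contra hwU
      have hmem : w ∈ nb U :=
        (hnb_mem U w).mpr ⟨hwU, v, hvU, (mem_neighborFinset G v w).mp hw⟩
      rw [hempty] at hmem
      exact absurd hmem (Finset.notMem_empty w)
    set EU := G.edgeFinset.filter (fun e => ∀ x ∈ e, x ∈ U) with hEU
    have hsum : ∑ v ∈ U, (G.neighborFinset v ∩ U).card = 2 * EU.card := by
      have h1 : ∀ v ∈ U, (G.neighborFinset v ∩ U).card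
          = (EU.filter fun e => v ∈ e).card := by
        intro v hvU
        rw [← card_edges_at G v U hvU, hEU, Finset.filter_filter]
        congr 1
        apply Finset.filter_congr
        intro e he
        exact ⟨fun ⟨a, b⟩ => ⟨b, a⟩, fun ⟨a, b⟩ => ⟨b, a⟩⟩
      rw [Finset.sum_congr rfl h1, sum_card_filter_mem U EU]
      have h2 : ∀ e ∈ EU, (U.filter fun v => v ∈ e).card = 2 := by
        intro e he
        rw [hEU, Finset.mem_filter] at he
        obtain ⟨heE, hall⟩ := he
        have hd := G.not_isDiag_of_mem_edgeSet (mem_edgeFinset.mp heE)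
        obtain ⟨a, b⟩ := e
        have hab : a ≠ b := fun h => hd (by rw [Sym2.isDiag_iff_proj_eq]; exact h)
        have hfe : U.filter (fun v => v ∈ s(a, b)) = {a, b} := by
          ext w
          simp only [Finset.mem_filter, Sym2.mem_iff, Finset.mem_insert,
            Finset.mem_singleton]
          constructor
          · rintro ⟨-, h⟩
            exact h
          · rintro (rfl | rfl)
            · exact ⟨hall _ (Sym2.mem_mk_left _ _), Or.inl rfl⟩
            · exact ⟨hall _ (Sym2.mem_mk_right _ _), Or.inr rfl⟩
        rw [hfe, Finset.card_insert_of_notMem (by simpa using hab),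
          Finset.card_singleton]
      rw [Finset.sum_congr rfl h2, Finset.sum_const, smul_eq_mul, Nat.mul_comm]
    have hge : 2 * (t * U.card) ≤ 2 * EU.card := by
      rw [← hsum]
      have hconst : ∑ _v ∈ U, 2 * t = 2 * (t * U.card) := by
        rw [Finset.sum_const, smul_eq_mul]
        ring
      rw [← hconst]
      refine Finset.sum_le_sum ?_
      intro v hvU
      rw [Finset.inter_eq_left.mpr (hNsub v hvU)]
      exact hdeg v
    have hle : EU.card ≤ eM U := by
      rw [heM]
      apply Finset.card_le_card
      intro e hee
      rw [hEU, Finset.mem_filter] at hee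
      rw [Finset.mem_filter]
      obtain ⟨a, b⟩ := e
      exact ⟨hee.1, a, Sym2.mem_mk_left a b, hee.2 a (Sym2.mem_mk_left a b)⟩
    rw [hempty] at hUineq
    rw [Finset.card_empty] at hUineq
    omega
  exact ⟨U, nb U, hnb_mem U, hUconn, hNUne, hexp⟩

/-- Min-degree extraction: if `e(G) ≥ t·n` then some nonempty `S` has all degrees
inside `S` at least `t+1`. -/
theorem exists_min_degree_subset [Fintype V] [DecidableEq V] (G : SimpleGraph V)
    [DecidableRel G.Adj] (t : ℕ) (ht : 1 ≤ t) [Nonempty V]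
    (he : t * Fintype.card V ≤ G.edgeFinset.card) :
    ∃ S : Finset V, S.Nonempty ∧ ∀ v ∈ S, t + 1 ≤ (G.neighborFinset v ∩ S).card := by
  classical
  set eIn : Finset V → ℕ := fun S => (G.edgeFinset.filter fun e => ∀ x ∈ e, x ∈ S).card
    with heIn
  set Φ : Finset V → Prop := fun S => S.Nonempty ∧ t * S.card + 1 ≤ eIn S + t with hΦ
  have huniv : Φ Finset.univ := by
    refine ⟨Finset.univ_nonempty, ?_⟩
    have h1 : eIn Finset.univ = G.edgeFinset.card := by
      rw [heIn]
      simp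
    rw [h1, Finset.card_univ]
    omega
  obtain ⟨S, hSmem, hSmin⟩ := Finset.exists_min_image
    (Finset.univ.powerset.filter fun S => Φ S) Finset.card
    ⟨Finset.univ, by
      rw [Finset.mem_filter]
      exact ⟨Finset.mem_powerset.mpr (Finset.subset_univ _), huniv⟩⟩
  rw [Finset.mem_filter] at hSmem
  obtain ⟨-, hSne, hSineq⟩ := hSmem
  refine ⟨S, hSne, ?_⟩
  by_contra hcon
  push_neg at hcon
  obtain ⟨v, hvS, hvdeg⟩ := hcon
  -- the edge count splits when we erase `v`
  have hsplit : eIn S = eIn (S.erase v) + (G.neighborFinset v ∩ S).card := by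
    have hpart : (G.edgeFinset.filter fun e => ∀ x ∈ e, x ∈ S)
        = (G.edgeFinset.filter fun e => ∀ x ∈ e, x ∈ S.erase v)
          ∪ (G.edgeFinset.filter fun e => v ∈ e ∧ ∀ x ∈ e, x ∈ S) := by
      ext e
      simp only [Finset.mem_filter, Finset.mem_union, Finset.mem_erase]
      constructor
      · rintro ⟨he, hall⟩
        by_cases hve : v ∈ e
        · exact Or.inr ⟨he, hve, hall⟩
        · exact Or.inl ⟨he, fun x hx => ⟨fun hxv => hve (hxv ▸ hx), hall x hx⟩⟩
      · rintro (⟨he, hall⟩ | ⟨he, -, hall⟩)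
        · exact ⟨he, fun x hx => (hall x hx).2⟩
        · exact ⟨he, hall⟩
    have hdisj : Disjoint (G.edgeFinset.filter fun e => ∀ x ∈ e, x ∈ S.erase v)
        (G.edgeFinset.filter fun e => v ∈ e ∧ ∀ x ∈ e, x ∈ S) := by
      rw [Finset.disjoint_left]
      intro e he1 he2
      rw [Finset.mem_filter] at he1 he2
      have := he1.2 v he2.2.1
      exact (Finset.mem_erase.mp this).1 rfl
    rw [heIn]
    dsimp only
    rw [hpart, Finset.card_union_of_disjoint hdisj, card_edges_at G v S hvS]
  have hS2 : 2 ≤ S.card := by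
    by_contra h2
    push_neg at h2
    obtain ⟨w, rfl⟩ := Finset.card_eq_one.mp (le_antisymm (by omega) hSne.card_pos)
    have h0 : eIn {w} = 0 := by
      rw [heIn]
      dsimp only
      rw [Finset.card_eq_zero, Finset.filter_eq_empty_iff]
      intro e he
      intro hall
      have hd := G.not_isDiag_of_mem_edgeSet (mem_edgeFinset.mp he)
      obtain ⟨a, b⟩ := e
      have ha := Finset.mem_singleton.mp (hall a (Sym2.mem_mk_left a b))
      have hb := Finset.mem_singleton.mp (hall b (Sym2.mem_mk_right a b))
      exact hd (by rw [Sym2.isDiag_iff_proj_eq]; rw [ha, hb])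
    rw [Finset.card_singleton, h0] at hSineq
    omega
  -- the smaller set still satisfies the property
  have hΦ' : Φ (S.erase v) := by
    refine ⟨?_, ?_⟩
    · rw [← Finset.card_pos, Finset.card_erase_of_mem hvS]
      omega
    · rw [Finset.card_erase_of_mem hvS]
      obtain ⟨c', hc'⟩ : ∃ c', S.card = c' + 1 := ⟨S.card - 1, by omega⟩
      rw [hc'] at hSineq ⊢
      rw [Nat.mul_succ] at hSineq
      simp only [Nat.add_sub_cancel]
      omega
  have hlt : (S.erase v).card < S.card := Finset.card_erase_lt_of_mem hvS
  have := hSmin (S.erase v) (by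
    rw [Finset.mem_filter]
    exact ⟨Finset.mem_powerset.mpr (Finset.subset_univ _), hΦ'⟩)
  omega

/-- Neighborhoods in induced subgraphs. -/
lemma ncard_neighborSet_induce (s : Set V) (x : s) :
    ((G.induce s).neighborSet x).ncard = (G.neighborSet ↑x ∩ s).ncard := by
  have himg : Subtype.val '' ((G.induce s).neighborSet x) = G.neighborSet ↑x ∩ s := by
    ext z
    simp only [Set.mem_image, mem_neighborSet, Set.mem_inter_iff]
    constructor
    · rintro ⟨w, hw, rfl⟩
      exact ⟨hw, w.2⟩
    · rintro ⟨hz, hzs⟩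
      exact ⟨⟨z, hzs⟩, hz, rfl⟩
  rw [← himg, Set.ncard_image_of_injective _ Subtype.val_injective]

/-- The main induction (Mader's theorem, minimum degree form). -/
theorem key {α : Type*} [Fintype α] [LinearOrder α] :
    ∀ (m : ℕ) (X : SimpleGraph α), X.edgeSet.ncard ≤ m →
    ∀ {V : Type*} [Fintype V] [Nonempty V] (G : SimpleGraph V),
      (∀ v : V, 2 * ((Fintype.card α + 1) * 2 ^ m) ≤ (G.neighborSet v).ncard) →
      Nonempty (SubdivData X G) := by
  intro m
  induction m with
  | zero =>
    intro X hm V _ _ G hdeg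
    have hVcard : Fintype.card α ≤ Fintype.card V := by
      obtain ⟨v⟩ := (inferInstance : Nonempty V)
      have hv := hdeg v
      have hub : (G.neighborSet v).ncard + 1 ≤ Fintype.card V := by
        have h1 : (insert v (G.neighborSet v)).ncard = (G.neighborSet v).ncard + 1 :=
          Set.ncard_insert_of_notMem (fun h => G.irrefl h) (Set.toFinite _)
        have h2 : (insert v (G.neighborSet v)).ncard ≤ (Set.univ : Set V).ncard :=
          Set.ncard_le_ncard (Set.subset_univ _) (Set.toFinite _)
        rw [Set.ncard_univ, Nat.card_eq_fintype_card] at h2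
        omega
      have hp : 1 ≤ 2 ^ 0 := le_refl 1
      nlinarith
    have hX : X.edgeSet = ∅ := (Set.ncard_eq_zero (Set.toFinite _)).mp (Nat.le_zero.mp hm)
    exact subdivData_base X hX hVcard G
  | succ m ih =>
    intro X hm V _ _ G hdeg
    classical
    have hVcard : Fintype.card α ≤ Fintype.card V := by
      obtain ⟨v⟩ := (inferInstance : Nonempty V)
      have hv := hdeg v
      have hub : (G.neighborSet v).ncard + 1 ≤ Fintype.card V := by
        have h1 : (insert v (G.neighborSet v)).ncard = (G.neighborSet v).ncard + 1 :=
          Set.ncard_insert_of_notMem (fun h => G.irrefl h) (Set.toFinite _)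
        have h2 : (insert v (G.neighborSet v)).ncard ≤ (Set.univ : Set V).ncard :=
          Set.ncard_le_ncard (Set.subset_univ _) (Set.toFinite _)
        rw [Set.ncard_univ, Nat.card_eq_fintype_card] at h2
        omega
      have hp : 1 ≤ 2 ^ (m + 1) := Nat.one_le_two_pow
      nlinarith
    by_cases hE : X.edgeSet = ∅
    · exact subdivData_base X hE hVcard G
    · obtain ⟨x, y, hlt, hadj⟩ : ∃ x y, x < y ∧ X.Adj x y := by
        obtain ⟨e, he⟩ := Set.nonempty_iff_ne_empty.mpr hE
        obtain ⟨a, b⟩ := e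
        have hab : X.Adj a b := (mem_edgeSet X).mp he
        rcases lt_or_gt_of_ne hab.ne with h | h
        · exact ⟨a, b, h, hab⟩
        · exact ⟨b, a, h, hab.symm⟩
      set X' := X.deleteEdges {s(x, y)} with hX'
      have hm' : X'.edgeSet.ncard ≤ m := by
        rw [hX', edgeSet_deleteEdges]
        have := Set.ncard_diff_singleton_of_mem (s := X.edgeSet) (a := s(x, y)) hadj
        omega
      set t := (Fintype.card α + 1) * 2 ^ (m + 1) with hts
      have ht : 1 ≤ t := by
        have h0 : 0 < t := by positivity
        omega
      have hdeg' : ∀ v, 2 * t ≤ G.degree v := by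
        intro v
        have := hdeg v
        rwa [show (G.neighborSet v).ncard = G.degree v by
          rw [Set.ncard_eq_toFinset_card']; rfl] at this
      obtain ⟨U, NU, hNU, hUconn, hNUne, hexp⟩ := exists_expanding_nbhd G t ht hdeg'
      haveI : Nonempty ↥(↑NU : Set V) := ⟨⟨hNUne.choose, hNUne.choose_spec⟩⟩
      have hdegH : ∀ w : ↥(↑NU : Set V),
          2 * ((Fintype.card α + 1) * 2 ^ m) ≤ ((G.induce ↑NU).neighborSet w).ncard := by
        intro w
        rw [ncard_neighborSet_induce]
        have hbr : (G.neighborSet ↑w ∩ ↑NU).ncard = (G.neighborFinset ↑w ∩ NU).card := by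
          rw [← Set.ncard_coe_finset (G.neighborFinset ↑w ∩ NU)]
          congr 1
          simp [Set.ext_iff]
        rw [hbr]
        have hw := hexp ↑w (by exact_mod_cast w.2)
        have heq : 2 * ((Fintype.card α + 1) * 2 ^ m) = t := by
          rw [hts, pow_succ]
          ring
        omega
      obtain ⟨D0⟩ := ih X' hm' (G.induce ↑NU) hdegH
      obtain ⟨D, hDf, hDsupp⟩ := subdivData_map X' (SimpleGraph.Embedding.induce _) D0
      have hval : ∀ z : ↥(↑NU : Set V), (SimpleGraph.Embedding.induce (G := G) (↑NU : Set V)) z = ↑z :=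
        fun z => rfl
      refine subdivData_extend X hlt hadj (↑U) (↑NU) ?_ ?_ D ?_ ?_ ?_ ?_
      · intro z hz
        exact fun hzU => ((hNU z).mp (by exact_mod_cast hz)).1 (by exact_mod_cast hzU)
      · intro a ha b hb
        obtain ⟨p, hp⟩ := hUconn a (by exact_mod_cast ha) b (by exact_mod_cast hb)
        exact ⟨p, fun z hz => by exact_mod_cast hp z hz⟩
      · intro a
        rw [hDf a, hval]
        exact (D0.f a).2
      · intro u v h1 h2 z hz
        obtain ⟨z0, rfl, -⟩ := hDsupp u v h1 h2 z hz
        rw [hval]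
        exact z0.2
      · have hx : D.f x ∈ NU := by
          have := (D0.f x).2
          rw [hDf x, hval]
          exact_mod_cast this
        obtain ⟨-, u, huU, hu⟩ := (hNU _).mp hx
        exact ⟨u, by exact_mod_cast huU, hu⟩
      · have hy : D.f y ∈ NU := by
          have := (D0.f y).2
          rw [hDf y, hval]
          exact_mod_cast this
        obtain ⟨-, u, huU, hu⟩ := (hNU _).mp hy
        exact ⟨u, by exact_mod_cast huU, hu⟩

end Mader

/-- Theorem 1.2 (Mader): for each graph `F` there is `d_F` such that every graph with average
degree at least `d_F` contains an `F`-subdivision. -/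
theorem stmt_4 {α : Type*} [Fintype α] (F : SimpleGraph α) :
    ∃ dF : ℝ, ∀ (V : Type*) [Fintype V] (G : SimpleGraph V),
      dF ≤ 2 * (G.edgeSet.ncard : ℝ) / (Fintype.card V : ℝ) →
      ∃ H : G.Subgraph, F.IsSubdivision H.coe := by
  classical
  letI : LinearOrder α := LinearOrder.lift' (Fintype.equivFin α) (Fintype.equivFin α).injective
  set c : ℕ := Fintype.card α + 1 with hc
  set m : ℕ := F.edgeSet.ncard with hm
  set tB : ℕ := 2 * (c * 2 ^ m) with htB
  refine ⟨((2 * tB : ℕ) : ℝ), ?_⟩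
  intro V _ G havg
  have htBpos : 0 < tB := by positivity
  by_cases hV : Fintype.card V = 0
  · exfalso
    rw [hV] at havg
    norm_num at havg
    have h2 : (0 : ℝ) < ((2 * tB : ℕ) : ℝ) := by
      exact_mod_cast Nat.succ_le_of_lt (by omega)
    push_cast at h2
    linarith
  · have hV1 : 0 < Fintype.card V := Nat.pos_of_ne_zero hV
    haveI : Nonempty V := Fintype.card_pos_iff.mp hV1
    have hedge : tB * Fintype.card V ≤ G.edgeFinset.card := by
      have hn : (0 : ℝ) < (Fintype.card V : ℝ) := by exact_mod_cast hV1
      rw [le_div_iff₀ hn] at havg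
      have hE : G.edgeSet.ncard = G.edgeFinset.card := by
        rw [Set.ncard_eq_toFinset_card']
        rfl
      have hr : ((tB * Fintype.card V : ℕ) : ℝ) ≤ (G.edgeSet.ncard : ℝ) := by
        push_cast at havg ⊢
        linarith
      rw [← hE]
      exact_mod_cast hr
    obtain ⟨S, hSne, hSdeg⟩ := Mader.exists_min_degree_subset G tB (by omega) hedge
    haveI : Nonempty ↥(↑S : Set V) := ⟨⟨hSne.choose, hSne.choose_spec⟩⟩
    have hdegS : ∀ w : ↥(↑S : Set V),
        2 * (c * 2 ^ m) ≤ ((G.induce ↑S).neighborSet w).ncard := by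
      intro w
      rw [Mader.ncard_neighborSet_induce]
      have hbr : (G.neighborSet ↑w ∩ ↑S).ncard = (G.neighborFinset ↑w ∩ S).card := by
        rw [← Set.ncard_coe_finset (G.neighborFinset ↑w ∩ S)]
        congr 1
        simp [Set.ext_iff]
      rw [hbr]
      have hw := hSdeg ↑w (by exact_mod_cast w.2)
      omega
    obtain ⟨D0⟩ := Mader.key m F (le_refl m) (G.induce ↑S) hdegS
    obtain ⟨D, -, -⟩ := Mader.subdivData_map F (SimpleGraph.Embedding.induce _) D0
    exact Mader.isSubdivision_of_subdivData F D
end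

section
/- Let d ≥ 4 be an even integer and let F be a 2-vertex-connected graph with at least one edge such that the complete bipartite graph K_{2,d} contains no subgraph which is a subdivision of F. Then there exists a d-regular graph G on d(d + 2) + 2 vertices such that every collection of pairwise vertex-disjoint subgraphs of G, each of which is a subdivision of F, covers at most d(d + 2) vertices of G (i.e., at least 2 vertices of G are uncovered). -/
open SimpleGraph

namespace Stmt6

/-! ### Walk segment lemmas -/

lemma start_not_mem_dropUntil_support {V : Type*} [DecidableEq V] {G : SimpleGraph V}
    {x y u : V} (p : G.Walk x y) (hp : p.IsPath) (hu : u ∈ p.support) (hne : u ≠ x) :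
    x ∉ (p.dropUntil u hu).support := by
  intro hx
  have hnodup := hp.support_nodup
  rw [← p.take_spec hu, SimpleGraph.Walk.support_append] at hnodup
  have hx2 : x ∈ (p.dropUntil u hu).support.tail := by
    rw [SimpleGraph.Walk.support_eq_cons (p.dropUntil u hu)] at hx
    rcases List.mem_cons.1 hx with h | h
    · exact absurd h.symm hne
    · exact h
  have hx1 : x ∈ (p.takeUntil u hu).support := SimpleGraph.Walk.start_mem_support _
  exact (List.disjoint_of_nodup_append hnodup) hx1 hx2

lemma avoid_in_segment {V : Type*} [DecidableEq V] {G : SimpleGraph V} {x y u z : V}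
    (p : G.Walk x y) (hp : p.IsPath) (hu : u ∈ p.support) (hz : z ≠ u) :
    z ∉ (p.takeUntil u hu).support ∨ z ∉ (p.dropUntil u hu).support := by
  have hnodup := hp.support_nodup
  rw [← p.take_spec hu, SimpleGraph.Walk.support_append] at hnodup
  by_cases h1 : z ∈ (p.takeUntil u hu).support
  · right
    intro h2
    have hz2 : z ∈ (p.dropUntil u hu).support.tail := by
      rw [SimpleGraph.Walk.support_eq_cons (p.dropUntil u hu)] at h2
      rcases List.mem_cons.1 h2 with h | h
      · exact absurd h hz
      · exact h
    exact (List.disjoint_of_nodup_append hnodup) h1 hz2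
  · left; exact h1

/-! ### Transport of subdivisions along isomorphisms -/

lemma isSubdivisionP_of_iso {α β γ : Type*} {F : SimpleGraph α} {G₁ : SimpleGraph β}
    {G₂ : SimpleGraph γ} {ok : ℕ → Prop} (e : G₁ ≃g G₂) (h : F.IsSubdivisionP G₁ ok) :
    F.IsSubdivisionP G₂ ok := by
  classical
  obtain ⟨f, P, hinj, hpath, hlen, hrev, hint, hdisj, hcover, hedge⟩ := h
  have heinj : Function.Injective e.toHom := e.toEquiv.injective
  refine ⟨fun a => e.toHom (f a), fun u v hadj => (P u v hadj).map e.toHom,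
    heinj.comp hinj, ?_, ?_, ?_, ?_, ?_, ?_, ?_⟩
  · exact fun u v hadj => SimpleGraph.Walk.map_isPath_of_injective heinj (hpath u v hadj)
  · intro u v hadj
    rw [SimpleGraph.Walk.length_map]
    exact hlen u v hadj
  · intro u v hadj
    show (P v u hadj.symm).map e.toHom = ((P u v hadj).map e.toHom).reverse
    rw [hrev u v hadj, SimpleGraph.Walk.reverse_map]
  · rintro u v hadj w ⟨hws, hw1, hw2⟩ ⟨a, ha⟩
    rw [SimpleGraph.Walk.support_map, List.mem_map] at hws
    obtain ⟨w₀, hw₀s, hw₀e⟩ := hws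
    subst hw₀e
    refine hint u v hadj w₀ ⟨hw₀s, ?_, ?_⟩ ⟨a, heinj ha⟩
    · intro h; exact hw1 (by rw [h])
    · intro h; exact hw2 (by rw [h])
  · rintro u v u' v' hadj hadj' hne w ⟨hws, hw1, hw2⟩ ⟨hws', hw1', hw2'⟩
    rw [SimpleGraph.Walk.support_map, List.mem_map] at hws hws'
    obtain ⟨w₀, hw₀s, hw₀e⟩ := hws
    obtain ⟨w₁, hw₁s, hw₁e⟩ := hws'
    have hww : w₁ = w₀ := heinj (by rw [hw₀e, hw₁e])
    rw [hww] at hw₁s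
    exact hdisj u v u' v' hadj hadj' hne w₀
      ⟨hw₀s, fun h => hw1 (by rw [← hw₀e, h]), fun h => hw2 (by rw [← hw₀e, h])⟩
      ⟨hw₁s, fun h => hw1' (by rw [← hw₀e, h]), fun h => hw2' (by rw [← hw₀e, h])⟩
  · intro w
    rcases hcover (e.symm w) with ⟨a, ha⟩ | ⟨u, v, hadj, hs⟩
    · left
      refine ⟨a, ?_⟩
      show e.toHom (f a) = w
      rw [ha]
      exact e.apply_symm_apply w
    · right
      refine ⟨u, v, hadj, ?_⟩
      rw [SimpleGraph.Walk.support_map, List.mem_map]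
      exact ⟨e.symm w, hs, e.apply_symm_apply w⟩
  · intro x y hxy
    have hxy' : G₁.Adj (e.symm x) (e.symm y) := by
      rw [← e.map_rel_iff]; simpa using hxy
    obtain ⟨u, v, hadj, he⟩ := hedge _ _ hxy'
    refine ⟨u, v, hadj, ?_⟩
    rw [SimpleGraph.Walk.edges_map, List.mem_map]
    refine ⟨_, he, ?_⟩
    show Sym2.map e.toHom s(e.symm x, e.symm y) = s(x, y)
    rw [Sym2.map_pair_eq]
    simp

/-! ### F-level lemmas -/

lemma first_step {V : Type*} {G : SimpleGraph V} : ∀ {a b : V}, G.Walk a b → a ≠ b →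
    ∃ c, G.Adj a c := by
  intro a b W hne
  cases W with
  | nil => exact absurd rfl hne
  | cons h q => exact ⟨_, h⟩

section FLemmas

variable {α : Type*} [Fintype α] {F : SimpleGraph α}

lemma exists_walk_avoid_vertex
    (hF2conn : ∀ a : α, (SimpleGraph.induce ({a}ᶜ : Set α) F).Connected)
    (w₀ p r : α) (hp : p ≠ w₀) (hr : r ≠ w₀) :
    ∃ W : F.Walk p r, w₀ ∉ W.support := by
  obtain ⟨W0⟩ := (hF2conn w₀).preconnected ⟨p, Set.mem_compl_singleton_iff.mpr hp⟩
    ⟨r, Set.mem_compl_singleton_iff.mpr hr⟩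
  refine ⟨W0.map (SimpleGraph.Embedding.induce ({w₀}ᶜ : Set α)).toHom, ?_⟩
  intro hmem
  have hmem' : w₀ ∈ (W0.map (SimpleGraph.Embedding.induce ({w₀}ᶜ : Set α)).toHom).support :=
    hmem
  revert hmem'
  rw [SimpleGraph.Walk.support_map, List.mem_map]
  rintro ⟨⟨x, hx⟩, -, hxe⟩
  exact hx hxe

lemma exists_third (hF3 : 3 ≤ Fintype.card α) (p r : α) : ∃ t : α, t ≠ p ∧ t ≠ r := by
  classical
  by_contra hc
  push_neg at hc
  have hsub : (Finset.univ : Finset α) ⊆ {p, r} := by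
    intro y _
    simp only [Finset.mem_insert, Finset.mem_singleton]
    rcases eq_or_ne y p with h | h
    · exact Or.inl h
    · exact Or.inr (hc y h)
  have := Finset.card_le_card hsub
  have h2 : ({p, r} : Finset α).card ≤ 2 := Finset.card_insert_le _ _ |>.trans (by simp)
  rw [Finset.card_univ] at this
  omega

lemma exists_other_neighbor (hF3 : 3 ≤ Fintype.card α)
    (hF2conn : ∀ a : α, (SimpleGraph.induce ({a}ᶜ : Set α) F).Connected)
    {u₀ v₀ : α} (h₀ : F.Adj u₀ v₀) :
    ∃ w, F.Adj u₀ w ∧ w ≠ v₀ := by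
  classical
  obtain ⟨y, hyu, hyv⟩ := exists_third hF3 u₀ v₀
  obtain ⟨W⟩ := (hF2conn v₀).preconnected ⟨u₀, by simpa using h₀.ne⟩ ⟨y, by simpa using hyv⟩
  obtain ⟨c, hc⟩ := first_step W (by simpa using hyu.symm)
  refine ⟨c.val, ?_, ?_⟩
  · exact ((SimpleGraph.Embedding.induce ({v₀}ᶜ : Set α)).toHom.map_adj hc)
  · exact c.prop

lemma exists_walk_avoid_edge (hF3 : 3 ≤ Fintype.card α)
    (hF2conn : ∀ a : α, (SimpleGraph.induce ({a}ᶜ : Set α) F).Connected)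
    {u₀ v₀ : α} (h₀ : F.Adj u₀ v₀) (p r : α) :
    ∃ W : F.Walk p r, s(u₀, v₀) ∉ W.edges := by
  classical
  have key : ∀ p' r' : α, p' ≠ u₀ → r' ≠ u₀ → ∃ W : F.Walk p' r', s(u₀, v₀) ∉ W.edges := by
    intro p' r' hp hr
    obtain ⟨W, hW⟩ := exists_walk_avoid_vertex hF2conn u₀ p' r' hp hr
    exact ⟨W, fun he => hW (W.fst_mem_support_of_mem_edges he)⟩
  obtain ⟨w, hw, hwv⟩ := exists_other_neighbor hF3 hF2conn h₀
  have hwu : w ≠ u₀ := fun h => F.irrefl (h ▸ hw)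
  have case2 : ∀ r' : α, r' ≠ u₀ → ∃ W : F.Walk u₀ r', s(u₀, v₀) ∉ W.edges := by
    intro r' hr
    obtain ⟨W, hW⟩ := key w r' hwu hr
    refine ⟨SimpleGraph.Walk.cons hw W, ?_⟩
    rw [SimpleGraph.Walk.edges_cons, List.mem_cons]
    rintro (he | he)
    · rcases Sym2.eq_iff.1 he with ⟨-, h2⟩ | ⟨h1, -⟩
      · exact hwv h2.symm
      · exact hwu h1.symm
    · exact hW he
  by_cases hp : p = u₀ <;> by_cases hr : r = u₀
  · subst hp; subst hr; exact ⟨SimpleGraph.Walk.nil, by simp⟩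
  · subst hp; exact case2 r hr
  · subst hr
    obtain ⟨W, hW⟩ := case2 p hp
    exact ⟨W.reverse, by rwa [SimpleGraph.Walk.edges_reverse, List.mem_reverse]⟩
  · exact key p r hp hr

end FLemmas

/-! ### Walks in a subdivision avoiding one vertex -/

section Main

variable {α β : Type*} [Fintype α] {F : SimpleGraph α} {G' : SimpleGraph β} {ok : ℕ → Prop}

open SimpleGraph.Walk

lemma lift_walk {f : α → β} (P : ∀ u v : α, F.Adj u v → G'.Walk (f u) (f v)) :
    ∀ (p r : α) (W : F.Walk p r), ∃ ω : G'.Walk (f p) (f r),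
      ∀ y ∈ ω.support, y = f p ∨ ∃ s t, ∃ h : F.Adj s t, s(s, t) ∈ W.edges ∧
        y ∈ (P s t h).support := by
  intro p r W
  induction W with
  | nil => exact ⟨SimpleGraph.Walk.nil, by simp⟩
  | @cons a b c hadj W' ih =>
    obtain ⟨ω', hω'⟩ := ih
    refine ⟨(P a b hadj).append ω', ?_⟩
    intro y hy
    rcases (mem_support_append_iff _ _).1 hy with hy1 | hy2
    · exact Or.inr ⟨a, b, hadj, by rw [edges_cons]; exact List.mem_cons_self, hy1⟩
    · rcases hω' y hy2 with rfl | ⟨s, t, h, hE, hsup⟩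
      · exact Or.inr ⟨a, b, hadj, by rw [edges_cons]; exact List.mem_cons_self,
          end_mem_support _⟩
      · exact Or.inr ⟨s, t, h, by rw [edges_cons]; exact List.mem_cons_of_mem _ hE, hsup⟩

lemma exists_walk_avoiding
    (hF3 : 3 ≤ Fintype.card α)
    (hF2conn : ∀ a : α, (SimpleGraph.induce ({a}ᶜ : Set α) F).Connected)
    (hsub : F.IsSubdivisionP G' ok) (z u v : β) (hu : u ≠ z) (hv : v ≠ z) :
    ∃ ω : G'.Walk u v, z ∉ ω.support := by
  classical
  obtain ⟨f, P, hinj, hpath, hlen, hrev, hint, hdisj, hcover, hedge⟩ := hsub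
  have key : ∃ (qu qv : α) (ω₁ : G'.Walk u (f qu)) (ω₂ : G'.Walk v (f qv))
      (ωm : G'.Walk (f qu) (f qv)), z ∉ ω₁.support ∧ z ∉ ω₂.support ∧ z ∉ ωm.support := by
    have hzloc : (∃ w₀, z = f w₀) ∨
        ∃ u₀ v₀, ∃ h₀ : F.Adj u₀ v₀, (P u₀ v₀ h₀).IsInternalVertex z := by
      rcases hcover z with ⟨w₀, hw₀⟩ | ⟨u₀, v₀, h₀, hs⟩
      · exact Or.inl ⟨w₀, hw₀.symm⟩
      · by_cases h1 : z = f u₀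
        · exact Or.inl ⟨u₀, h1⟩
        by_cases h2 : z = f v₀
        · exact Or.inl ⟨v₀, h2⟩
        exact Or.inr ⟨u₀, v₀, h₀, hs, h1, h2⟩
    rcases hzloc with ⟨w₀, rfl⟩ | ⟨u₀, v₀, h₀, hz0⟩
    · -- z is a branch vertex f w₀
      have reach : ∀ x : β, x ≠ f w₀ → ∃ q, q ≠ w₀ ∧
          ∃ ω : G'.Walk x (f q), f w₀ ∉ ω.support := by
        intro x hx
        by_cases hxr : x ∈ Set.range f
        · obtain ⟨q, rfl⟩ := hxr
          refine ⟨q, fun h => hx (by rw [h]), SimpleGraph.Walk.nil, ?_⟩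
          intro hm
          rw [support_nil, List.mem_singleton] at hm
          exact hx hm.symm
        · obtain ⟨s, t, h, hs, hts⟩ :
              ∃ s t, ∃ h : F.Adj s t, x ∈ (P s t h).support ∧ t ≠ w₀ := by
            rcases hcover x with hxr' | ⟨s, t, h, hs⟩
            · exact absurd hxr' hxr
            by_cases hts : t = w₀
            · refine ⟨t, s, h.symm, ?_, fun hh => F.irrefl ((hh.trans hts.symm) ▸ h)⟩
              rw [hrev s t h, support_reverse, List.mem_reverse]
              exact hs
            · exact ⟨s, t, h, hs, hts⟩
          refine ⟨t, hts, (P s t h).dropUntil x hs, ?_⟩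
          intro hmem
          have hmem' : f w₀ ∈ (P s t h).support := support_dropUntil_subset _ _ hmem
          by_cases hsw : s = w₀
          · have hns := start_not_mem_dropUntil_support (P s t h) (hpath s t h) hs
              (fun he => hxr ⟨s, he.symm⟩)
            have hfe : f w₀ = f s := congrArg f hsw.symm
            rw [hfe] at hmem
            exact hns hmem
          · by_cases h1 : f w₀ = f s
            · exact hsw (hinj h1).symm
            by_cases h2 : f w₀ = f t
            · exact hts (hinj h2).symm
            exact hint s t h (f w₀) ⟨hmem', h1, h2⟩ ⟨w₀, rfl⟩
      obtain ⟨qu, hqu, ω₁, h₁⟩ := reach u hu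
      obtain ⟨qv, hqv, ω₂, h₂⟩ := reach v hv
      obtain ⟨W, hW⟩ := exists_walk_avoid_vertex hF2conn w₀ qu qv hqu hqv
      obtain ⟨ωm, hm⟩ := lift_walk P qu qv W
      refine ⟨qu, qv, ω₁, ω₂, ωm, h₁, h₂, ?_⟩
      intro hzm
      rcases hm _ hzm with he | ⟨s, t, h, hE, hsup⟩
      · exact hqu (hinj he).symm
      · have hsW : s ∈ W.support := W.fst_mem_support_of_mem_edges hE
        have htW : t ∈ W.support := W.snd_mem_support_of_mem_edges hE
        have hs' : s ≠ w₀ := fun hh => hW (hh ▸ hsW)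
        have ht' : t ≠ w₀ := fun hh => hW (hh ▸ htW)
        by_cases h1 : f w₀ = f s
        · exact hs' (hinj h1).symm
        by_cases h2 : f w₀ = f t
        · exact ht' (hinj h2).symm
        exact hint s t h (f w₀) ⟨hsup, h1, h2⟩ ⟨w₀, rfl⟩
    · -- z is internal on the path of the edge u₀v₀
      have hznr : z ∉ Set.range f := hint u₀ v₀ h₀ z hz0
      have havoidP : ∀ s t (h : F.Adj s t), s(s, t) ≠ s(u₀, v₀) → z ∉ (P s t h).support := by
        intro s t h hne hmem
        by_cases h1 : z = f s
        · exact hznr ⟨s, h1.symm⟩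
        by_cases h2 : z = f t
        · exact hznr ⟨t, h2.symm⟩
        exact hdisj s t u₀ v₀ h h₀ hne z ⟨hmem, h1, h2⟩ hz0
      have reach : ∀ x : β, x ≠ z → ∃ q, ∃ ω : G'.Walk x (f q), z ∉ ω.support := by
        intro x hx
        by_cases hxr : x ∈ Set.range f
        · obtain ⟨q, rfl⟩ := hxr
          refine ⟨q, SimpleGraph.Walk.nil, ?_⟩
          intro hm
          rw [support_nil, List.mem_singleton] at hm
          exact hx hm.symm
        · rcases hcover x with hxr' | ⟨s, t, h, hs⟩
          · exact absurd hxr' hxr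
          · by_cases hst : s(s, t) = s(u₀, v₀)
            · have key2 : ∀ a b (hab : F.Adj a b), x ∈ (P a b hab).support →
                  x ∈ (P b a hab.symm).support := by
                intro a b hab hm
                rw [hrev a b hab, support_reverse, List.mem_reverse]
                exact hm
              have hxQ : x ∈ (P u₀ v₀ h₀).support := by
                rcases Sym2.eq_iff.1 hst with ⟨hsu, htv⟩ | ⟨hsv, htu⟩
                · subst hsu; subst htv; exact hs
                · subst hsv; subst htu; exact key2 _ _ _ hs
              rcases avoid_in_segment (P u₀ v₀ h₀) (hpath u₀ v₀ h₀) hxQ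
                  (fun hh => hx hh.symm) with h1 | h2
              · refine ⟨u₀, ((P u₀ v₀ h₀).takeUntil x hxQ).reverse, ?_⟩
                rwa [support_reverse, List.mem_reverse]
              · exact ⟨v₀, (P u₀ v₀ h₀).dropUntil x hxQ, h2⟩
            · exact ⟨t, (P s t h).dropUntil x hs,
                fun hm => havoidP s t h hst (support_dropUntil_subset _ _ hm)⟩
      obtain ⟨qu, ω₁, h₁⟩ := reach u hu
      obtain ⟨qv, ω₂, h₂⟩ := reach v hv
      obtain ⟨W, hW⟩ := exists_walk_avoid_edge hF3 hF2conn h₀ qu qv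
      obtain ⟨ωm, hm⟩ := lift_walk P qu qv W
      refine ⟨qu, qv, ω₁, ω₂, ωm, h₁, h₂, ?_⟩
      intro hzm
      rcases hm _ hzm with he | ⟨s, t, h, hE, hsup⟩
      · exact hznr (he ▸ ⟨qu, rfl⟩)
      · exact havoidP s t h (fun hee => hW (hee ▸ hE)) hsup
  obtain ⟨qu, qv, ω₁, ω₂, ωm, h₁, h₂, hmm⟩ := key
  refine ⟨ω₁.append (ωm.append ω₂.reverse), ?_⟩
  intro hmem
  rcases (mem_support_append_iff _ _).1 hmem with hc | hc
  · exact h₁ hc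
  rcases (mem_support_append_iff _ _).1 hc with hc' | hc'
  · exact hmm hc'
  · rw [support_reverse, List.mem_reverse] at hc'
    exact h₂ hc'

lemma nonempty_walk_of_isSubdivision
    (hF3 : 3 ≤ Fintype.card α)
    (hF2conn : ∀ a : α, (SimpleGraph.induce ({a}ᶜ : Set α) F).Connected)
    (hsub : F.IsSubdivisionP G' ok) (u v : β) :
    Nonempty (G'.Walk u v) := by
  classical
  obtain ⟨f, P, hinj, hpath, hlen, hrev, hint, hdisj, hcover, hedge⟩ := hsub
  have reach : ∀ x : β, ∃ q, Nonempty (G'.Walk x (f q)) := by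
    intro x
    rcases hcover x with ⟨q, rfl⟩ | ⟨s, t, h, hs⟩
    · exact ⟨q, ⟨SimpleGraph.Walk.nil⟩⟩
    · exact ⟨t, ⟨(P s t h).dropUntil x hs⟩⟩
  obtain ⟨qu, ⟨ω₁⟩⟩ := reach u
  obtain ⟨qv, ⟨ω₂⟩⟩ := reach v
  obtain ⟨t, ht1, ht2⟩ := exists_third hF3 qu qv
  obtain ⟨W, -⟩ := exists_walk_avoid_vertex hF2conn t qu qv ht1.symm ht2.symm
  obtain ⟨ωm, -⟩ := lift_walk P qu qv W
  exact ⟨ω₁.append (ωm.append ω₂.reverse)⟩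

end Main

/-! ### The construction -/

def mrel (j k : ℕ) : Prop :=
  (j = 0 ∧ (k = 1 ∨ k = 2 ∨ k = 3)) ∨ (k = 0 ∧ (j = 1 ∨ j = 2 ∨ j = 3)) ∨
  (4 ≤ j ∧ 4 ≤ k ∧ ((k = j + 1 ∧ Even j) ∨ (j = k + 1 ∧ Even k)))

lemma mrel_symm {j k : ℕ} (h : mrel j k) : mrel k j := by
  unfold mrel at *
  tauto

def adjT (d : ℕ) : (Fin 2 ⊕ Fin d × Fin (d + 2)) → (Fin 2 ⊕ Fin d × Fin (d + 2)) → Prop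
  | .inl _, .inl _ => False
  | .inl _, .inr p => p.2 = 0
  | .inr p, .inl _ => p.2 = 0
  | .inr p, .inr q => p.1 = q.1 ∧ p.2 ≠ q.2 ∧ ¬ mrel p.2.val q.2.val

def G0 (d : ℕ) : SimpleGraph (Fin 2 ⊕ Fin d × Fin (d + 2)) where
  Adj := adjT d
  symm := by
    constructor; rintro (h | p) (h' | q) hadj
    · exact hadj.elim
    · exact hadj
    · exact hadj
    · exact ⟨hadj.1.symm, hadj.2.1.symm, fun hm => hadj.2.2 (mrel_symm hm)⟩
  loopless := by
    constructor; rintro (h | p) hadj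
    · exact hadj.elim
    · exact hadj.2.1 rfl

lemma sep_walk {d : ℕ} (i : Fin d) :
    ∀ {x y : Fin 2 ⊕ Fin d × Fin (d + 2)} (ω : (G0 d).Walk x y),
      (∃ j : Fin (d + 2), j ≠ 0 ∧ x = Sum.inr (i, j)) →
      Sum.inr (i, (0 : Fin (d + 2))) ∉ ω.support →
      ∃ j : Fin (d + 2), j ≠ 0 ∧ y = Sum.inr (i, j) := by
  intro x y ω
  induction ω with
  | nil => exact fun hx _ => hx
  | @cons a b c hadj ω ih =>
    rintro ⟨j, hj, rfl⟩ hz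
    rw [SimpleGraph.Walk.support_cons, List.mem_cons] at hz
    push_neg at hz
    refine ih ?_ hz.2
    match b, hadj with
    | .inl h, hadj =>
      exact absurd hadj hj
    | .inr (i', j'), hadj =>
      obtain ⟨h1, h2, h3⟩ := hadj
      obtain rfl : i = i' := h1
      refine ⟨j', ?_, rfl⟩
      rintro rfl
      exact hz.2 (SimpleGraph.Walk.start_mem_support ω)

lemma hub_not_mem {α : Type*} [Fintype α] {F : SimpleGraph α} {d : ℕ}
    (hF3 : 3 ≤ Fintype.card α)
    (hF2conn : ∀ a : α, (SimpleGraph.induce ({a}ᶜ : Set α) F).Connected)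
    (hK2d : ¬ ∃ H : (completeBipartiteGraph (Fin 2) (Fin d)).Subgraph, F.IsSubdivision H.coe)
    (H : (G0 d).Subgraph) (hH : F.IsSubdivision H.coe) (h : Fin 2) :
    Sum.inl h ∉ H.verts := by
  classical
  intro ha
  set K : Set (Fin 2 ⊕ Fin d × Fin (d + 2)) :=
    {w | ∀ p : Fin d × Fin (d + 2), w = Sum.inr p → p.2 = 0} with hK
  by_cases hsub : H.verts ⊆ K
  · apply hK2d
    set φ : (Fin 2 ⊕ Fin d × Fin (d + 2)) → (Fin 2 ⊕ Fin d) := Sum.map id Prod.fst with hφ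
    have hφinl : ∀ h₁ : Fin 2, φ (Sum.inl h₁) = Sum.inl h₁ := fun _ => rfl
    have hφinr : ∀ p : Fin d × Fin (d + 2), φ (Sum.inr p) = Sum.inr p.1 := fun _ => rfl
    have hinjK : Set.InjOn φ K := by
      rintro (h₁ | p₁) hm₁ (h₂ | p₂) hm₂ he
      · rw [hφinl, hφinl] at he
        rw [Sum.inl.inj he]
      · rw [hφinl, hφinr] at he
        exact absurd he (by simp)
      · rw [hφinr, hφinl] at he
        exact absurd he (by simp)
      · rw [hφinr, hφinr] at he
        have e1 : p₁.1 = p₂.1 := Sum.inr.inj he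
        have e2 : p₁.2 = 0 := hm₁ p₁ rfl
        have e3 : p₂.2 = 0 := hm₂ p₂ rfl
        rw [Prod.ext_iff.2 ⟨e1, e2.trans e3.symm⟩]
    have hadjK : ∀ {x y}, H.Adj x y →
        (completeBipartiteGraph (Fin 2) (Fin d)).Adj (φ x) (φ y) := by
      intro x y hxy
      have hx : x ∈ K := hsub (H.edge_vert hxy)
      have hy : y ∈ K := hsub (H.edge_vert hxy.symm)
      have hG : (G0 d).Adj x y := H.adj_sub hxy
      match x, y, hG with
      | .inl h₁, .inl h₂, hG => exact hG.elim
      | .inl h₁, .inr p, hG => exact Or.inl (by simp [hφinl, hφinr])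
      | .inr p, .inl h₁, hG => exact Or.inr (by simp [hφinl, hφinr])
      | .inr p, .inr q, hG =>
        exact absurd ((hx p rfl).trans (hy q rfl).symm) hG.2.1
    set H' : (completeBipartiteGraph (Fin 2) (Fin d)).Subgraph :=
      { verts := φ '' H.verts
        Adj := fun x y => ∃ p q, H.Adj p q ∧ φ p = x ∧ φ q = y
        adj_sub := by rintro x y ⟨p, q, hpq, rfl, rfl⟩; exact hadjK hpq
        edge_vert := by rintro x y ⟨p, q, hpq, rfl, rfl⟩; exact ⟨p, H.edge_vert hpq, rfl⟩
        symm := by constructor; rintro x y ⟨p, q, hpq, rfl, rfl⟩; exact ⟨q, p, hpq.symm, rfl, rfl⟩ } with hH'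
    refine ⟨H', ?_⟩
    have hinj' : Set.InjOn φ H.verts := hinjK.mono hsub
    refine isSubdivisionP_of_iso ⟨Equiv.Set.imageOfInjOn φ H.verts hinj', ?_⟩ hH
    intro a b
    constructor
    · rintro ⟨p, q, hpq, hp, hq⟩
      have hp' : p = a.val := hinj' (H.edge_vert hpq) a.prop hp
      have hq' : q = b.val := hinj' (H.edge_vert hpq.symm) b.prop hq
      rw [hp', hq'] at hpq
      exact hpq
    · intro hab
      exact ⟨a.val, b.val, hab, rfl, rfl⟩
  · rw [Set.not_subset] at hsub
    obtain ⟨w, hwH, hwK⟩ := hsub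
    simp only [hK, Set.mem_setOf_eq] at hwK
    push_neg at hwK
    obtain ⟨p, rfl, hp2⟩ := hwK
    set z : Fin 2 ⊕ Fin d × Fin (d + 2) := Sum.inr (p.1, 0) with hz
    have hpz : (Sum.inr p : Fin 2 ⊕ Fin d × Fin (d + 2)) ≠ z := by
      intro he
      exact hp2 (congrArg Prod.snd (Sum.inr.inj he))
    have hwalk : ∃ ω0 : (G0 d).Walk (Sum.inr p) (Sum.inl h), z ∉ ω0.support := by
      by_cases hzH : z ∈ H.verts
      · obtain ⟨ω, hω⟩ := exists_walk_avoiding hF3 hF2conn hH ⟨z, hzH⟩ ⟨Sum.inr p, hwH⟩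
          ⟨Sum.inl h, ha⟩ (fun he => hpz (congrArg Subtype.val he))
          (fun he => (by simp [hz] at he : False).elim)
        refine ⟨ω.map H.hom, ?_⟩
        intro hmem
        have hmem' : z ∈ (ω.map H.hom).support := hmem
        revert hmem'
        rw [SimpleGraph.Walk.support_map, List.mem_map]
        rintro ⟨y, hy, hye⟩
        rw [show y = ⟨z, hzH⟩ from Subtype.ext hye] at hy
        exact hω hy
      · obtain ⟨ω⟩ := nonempty_walk_of_isSubdivision hF3 hF2conn hH ⟨Sum.inr p, hwH⟩
          ⟨Sum.inl h, ha⟩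
        refine ⟨ω.map H.hom, ?_⟩
        intro hmem
        have hmem' : z ∈ (ω.map H.hom).support := hmem
        revert hmem'
        rw [SimpleGraph.Walk.support_map, List.mem_map]
        rintro ⟨y, hy, hye⟩
        exact hzH (hye ▸ y.prop)
    obtain ⟨ω0, hz0⟩ := hwalk
    obtain ⟨j, hj, hcontr⟩ := sep_walk p.1 ω0 ⟨p.2, hp2, by rw [Prod.mk.eta]⟩ hz0
    exact (by simp at hcontr : False)

lemma mrel_irrefl (j : ℕ) : ¬ mrel j j := by
  unfold mrel
  rintro (⟨rfl, h⟩ | ⟨rfl, h⟩ | ⟨h1, h2, ⟨h3, -⟩ | ⟨h3, -⟩⟩) <;> omega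

lemma neighborSet_G0_inl {d : ℕ} (h : Fin 2) :
    ((G0 d).neighborSet (Sum.inl h)).ncard = d := by
  have hset : (G0 d).neighborSet (Sum.inl h) =
      (fun i : Fin d => (Sum.inr (i, 0) : Fin 2 ⊕ Fin d × Fin (d + 2))) '' Set.univ := by
    ext w
    rw [SimpleGraph.mem_neighborSet]
    cases w with
    | inl h' =>
      constructor
      · exact fun hadj => hadj.elim
      · rintro ⟨i, -, hie⟩
        exact absurd hie (by simp)
    | inr p =>
      constructor
      · intro hadj
        have hp2 : p.2 = 0 := hadj
        refine ⟨p.1, trivial, ?_⟩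
        show Sum.inr (p.1, (0 : Fin (d + 2))) = Sum.inr p
        rw [← hp2]
      · rintro ⟨i, -, hie⟩
        have : (i, (0 : Fin (d + 2))) = p := Sum.inr.inj hie
        show p.2 = 0
        rw [← this]
  rw [hset, Set.ncard_image_of_injective _ (fun a b hab => by
    simpa using (Prod.ext_iff.1 (Sum.inr.inj hab)).1)]
  simp [Set.ncard_univ]

lemma M_card {d : ℕ} (hd4 : 4 ≤ d) (hdev : Even d) (j : Fin (d + 2)) :
    ({k : Fin (d + 2) | mrel j.val k.val}).ncard = if j.val = 0 then 3 else 1 := by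
  have hd2 : d % 2 = 0 := Nat.even_iff.1 hdev
  have hjlt : j.val < d + 2 := j.isLt
  rcases Nat.lt_or_ge j.val 1 with hj0 | hj1
  · -- j.val = 0
    have hj : j.val = 0 := by omega
    have hM : {k : Fin (d + 2) | mrel j.val k.val} =
        {(⟨1, by omega⟩ : Fin (d + 2)), ⟨2, by omega⟩, ⟨3, by omega⟩} := by
      ext k
      simp only [Set.mem_setOf_eq, mrel, Nat.even_iff, Set.mem_insert_iff,
        Set.mem_singleton_iff, Fin.ext_iff, hj, true_and, and_true]
      omega
    rw [hM, if_pos hj]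
    rw [Set.ncard_insert_of_notMem (by simp [Fin.ext_iff]),
      Set.ncard_insert_of_notMem (by simp [Fin.ext_iff]), Set.ncard_singleton]
  rcases Nat.lt_or_ge j.val 4 with hj3 | hj4
  · -- 1 ≤ j.val ≤ 3
    have hM : {k : Fin (d + 2) | mrel j.val k.val} = {(⟨0, by omega⟩ : Fin (d + 2))} := by
      ext k
      simp only [Set.mem_setOf_eq, mrel, Nat.even_iff, Set.mem_singleton_iff, Fin.ext_iff]
      omega
    rw [hM, if_neg (by omega), Set.ncard_singleton]
  · rcases Nat.even_or_odd j.val with hev | hodd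
    · have h2 : j.val % 2 = 0 := Nat.even_iff.1 hev
      have hM : {k : Fin (d + 2) | mrel j.val k.val} =
          {(⟨j.val + 1, by omega⟩ : Fin (d + 2))} := by
        ext k
        have := k.isLt
        simp only [Set.mem_setOf_eq, mrel, Nat.even_iff, Set.mem_singleton_iff, Fin.ext_iff]
        omega
      rw [hM, if_neg (by omega), Set.ncard_singleton]
    · have h2 : j.val % 2 = 1 := Nat.odd_iff.1 hodd
      have hM : {k : Fin (d + 2) | mrel j.val k.val} =
          {(⟨j.val - 1, by omega⟩ : Fin (d + 2))} := by
        ext k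
        have := k.isLt
        simp only [Set.mem_setOf_eq, mrel, Nat.even_iff, Set.mem_singleton_iff, Fin.ext_iff]
        omega
      rw [hM, if_neg (by omega), Set.ncard_singleton]

lemma neighborSet_G0_inr {d : ℕ} (hd4 : 4 ≤ d) (hdev : Even d) (i : Fin d) (j : Fin (d + 2)) :
    ((G0 d).neighborSet (Sum.inr (i, j))).ncard = d := by
  classical
  set M : Set (Fin (d + 2)) := {k | mrel j.val k.val} with hMdef
  set S : Set (Fin (d + 2)) := {k | k ≠ j ∧ ¬ mrel j.val k.val} with hSdef
  set A : Set (Fin 2 ⊕ Fin d × Fin (d + 2)) :=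
    (fun h' : Fin 2 => (Sum.inl h' : Fin 2 ⊕ Fin d × Fin (d + 2))) '' {h' | j = 0} with hAdef
  have hjM : j ∉ M := mrel_irrefl j.val
  have hS : S = Set.univ \ insert j M := by
    ext k
    simp only [hSdef, Set.mem_setOf_eq, Set.mem_diff, Set.mem_univ, Set.mem_insert_iff,
      hMdef, true_and]
    tauto
  have hScard : S.ncard = d + 1 - M.ncard := by
    rw [hS, Set.ncard_diff (Set.subset_univ (insert j M)) (Set.toFinite _)]
    rw [Set.ncard_insert_of_notMem hjM (Set.toFinite M), Set.ncard_univ]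
    simp only [Nat.card_eq_fintype_card, Fintype.card_fin]
    omega
  have hN : (G0 d).neighborSet (Sum.inr (i, j)) =
      A ∪ (fun k => (Sum.inr (i, k) : Fin 2 ⊕ Fin d × Fin (d + 2))) '' S := by
    ext w
    rw [SimpleGraph.mem_neighborSet]
    cases w with
    | inl h' =>
      constructor
      · intro hadj
        have : j = 0 := hadj
        exact Or.inl ⟨h', this, rfl⟩
      · rintro (⟨h'', hj0, he⟩ | ⟨k, -, hke⟩)
        · show j = 0
          exact hj0
        · exact absurd hke (by simp)
    | inr q =>
      constructor
      · intro hadj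
        obtain ⟨h1, h2, h3⟩ := hadj
        refine Or.inr ⟨q.2, ⟨fun hq => h2 hq.symm, h3⟩, ?_⟩
        show Sum.inr (i, q.2) = Sum.inr q
        rw [show i = q.1 from h1, Prod.mk.eta]
      · rintro (⟨h'', -, he⟩ | ⟨k, ⟨hk1, hk2⟩, hke⟩)
        · exact absurd he (by simp)
        · obtain rfl : (i, k) = q := Sum.inr.inj hke
          exact ⟨rfl, fun hq => hk1 hq.symm, hk2⟩
  have hdisj : Disjoint A ((fun k => (Sum.inr (i, k) : Fin 2 ⊕ Fin d × Fin (d + 2))) '' S) := by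
    rw [Set.disjoint_left]
    rintro x ⟨h'', -, rfl⟩ ⟨k, -, hke⟩
    exact absurd hke (by simp)
  have hAcard : A.ncard = if j = 0 then 2 else 0 := by
    by_cases hj0 : j = 0
    · rw [if_pos hj0]
      have : {h' : Fin 2 | j = 0} = Set.univ := by
        ext h'; simp [hj0]
      rw [hAdef, this, Set.ncard_image_of_injective _ (fun a b hab => Sum.inl.inj hab)]
      simp [Set.ncard_univ]
    · rw [if_neg hj0]
      have : {h' : Fin 2 | j = 0} = ∅ := by
        ext h'; simp [hj0]
      rw [hAdef, this]
      simp
  have hBcard : ((fun k => (Sum.inr (i, k) : Fin 2 ⊕ Fin d × Fin (d + 2))) '' S).ncard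
      = S.ncard := by
    apply Set.ncard_image_of_injective
    intro a b hab
    exact (Prod.ext_iff.1 (Sum.inr.inj hab)).2
  rw [hN, Set.ncard_union_eq hdisj (Set.toFinite _) (Set.toFinite _), hAcard, hBcard, hScard,
    M_card hd4 hdev j]
  have hj0iff : (j = 0) ↔ (j.val = 0) := by
    rw [Fin.ext_iff]
    simp
  by_cases hj0 : j.val = 0
  · rw [if_pos (hj0iff.2 hj0), if_pos hj0]
    omega
  · rw [if_neg (fun hh => hj0 (hj0iff.1 hh)), if_neg hj0]
    omega

lemma G0_regular {d : ℕ} (hd4 : 4 ≤ d) (hdev : Even d)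
    (v : Fin 2 ⊕ Fin d × Fin (d + 2)) : ((G0 d).neighborSet v).ncard = d := by
  cases v with
  | inl h => exact neighborSet_G0_inl h
  | inr p =>
    rw [← Prod.mk.eta (p := p)]
    exact neighborSet_G0_inr hd4 hdev p.1 p.2

lemma isSubdivisionP_map {V W : Type*} {G : SimpleGraph V} {G' : SimpleGraph W} (θ : G ≃g G')
    {α : Type*} {F : SimpleGraph α} {ok : ℕ → Prop} (H : G.Subgraph)
    (hH : F.IsSubdivisionP H.coe ok) :
    F.IsSubdivisionP (SimpleGraph.Subgraph.map θ.toHom H).coe ok := by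
  have hinj : Function.Injective θ.toHom := θ.toEquiv.injective
  refine isSubdivisionP_of_iso
    ⟨Equiv.Set.imageOfInjOn θ.toHom H.verts hinj.injOn, ?_⟩ hH
  intro a b
  constructor
  · rintro ⟨p, q, hpq, hp, hq⟩
    obtain rfl : p = a.val := hinj hp
    obtain rfl : q = b.val := hinj hq
    exact hpq
  · intro hab
    exact ⟨a.val, b.val, hab, rfl, rfl⟩

end Stmt6

/-- The lower-bound construction from the introduction: for even `d ≥ 4` and a
`2`-vertex-connected graph `F` with an edge such that `K_{2,d}` has no `F`-subdivision, there
is a `d`-regular graph on `d(d+2) + 2` vertices in which every collection of pairwise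
vertex-disjoint `F`-subdivisions covers at most `d(d+2)` vertices. -/
theorem stmt_6 {α : Type*} [Fintype α] (F : SimpleGraph α) (d : ℕ)
    (hd4 : 4 ≤ d) (hdev : Even d)
    (hF3 : 3 ≤ Fintype.card α)
    (hF2conn : ∀ a : α, (SimpleGraph.induce ({a}ᶜ : Set α) F).Connected)
    (hFe : ∃ a b : α, F.Adj a b)
    (hK2d : ¬ ∃ H : (completeBipartiteGraph (Fin 2) (Fin d)).Subgraph,
      F.IsSubdivision H.coe) :
    ∃ G : SimpleGraph (Fin (d * (d + 2) + 2)),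
      (∀ v, (G.neighborSet v).ncard = d) ∧
      ∀ 𝒞 : Set G.Subgraph,
        (∀ H ∈ 𝒞, F.IsSubdivision H.coe) →
        (𝒞.Pairwise fun H₁ H₂ => Disjoint H₁.verts H₂.verts) →
        (⋃ H ∈ 𝒞, H.verts).ncard ≤ d * (d + 2) := by
  classical
  obtain ⟨e⟩ : Nonempty (Fin (d * (d + 2) + 2) ≃ (Fin 2 ⊕ Fin d × Fin (d + 2))) :=
    ⟨(finCongr (by ring)).trans ((finSumFinEquiv (m := 2) (n := d * (d + 2))).symm.trans
      (Equiv.sumCongr (Equiv.refl (Fin 2)) finProdFinEquiv.symm))⟩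
  set G : SimpleGraph (Fin (d * (d + 2) + 2)) := (Stmt6.G0 d).comap e with hGdef
  set θ : G ≃g Stmt6.G0 d := ⟨e, Iff.rfl⟩ with hθ
  refine ⟨G, ?_, ?_⟩
  · intro v
    have hset : G.neighborSet v = e ⁻¹' ((Stmt6.G0 d).neighborSet (e v)) := rfl
    rw [hset, ← Equiv.image_symm_eq_preimage e,
      Set.ncard_image_of_injective _ e.symm.injective]
    exact Stmt6.G0_regular hd4 hdev (e v)
  · intro 𝒞 h𝒞 hpair
    set a' : Fin (d * (d + 2) + 2) := e.symm (Sum.inl 0) with ha'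
    set b' : Fin (d * (d + 2) + 2) := e.symm (Sum.inl 1) with hb'
    have hne : a' ≠ b' := by
      intro hab
      have := e.symm.injective hab
      simp at this
    have hsubset : (⋃ H ∈ 𝒞, H.verts) ⊆ Set.univ \ {a', b'} := by
      intro x hx
      rw [Set.mem_iUnion₂] at hx
      obtain ⟨H, hH𝒞, hxH⟩ := hx
      refine ⟨Set.mem_univ x, ?_⟩
      intro hxmem
      have hmap : F.IsSubdivision (SimpleGraph.Subgraph.map θ.toHom H).coe :=
        Stmt6.isSubdivisionP_map θ H (h𝒞 H hH𝒞)
      simp only [Set.mem_insert_iff, Set.mem_singleton_iff] at hxmem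
      rcases hxmem with rfl | rfl
      · exact Stmt6.hub_not_mem hF3 hF2conn hK2d _ hmap 0
          ⟨a', hxH, show e (e.symm (Sum.inl 0)) = Sum.inl 0 from e.apply_symm_apply _⟩
      · exact Stmt6.hub_not_mem hF3 hF2conn hK2d _ hmap 1
          ⟨b', hxH, show e (e.symm (Sum.inl 1)) = Sum.inl 1 from e.apply_symm_apply _⟩
    have hcard : (Set.univ \ {a', b'} : Set (Fin (d * (d + 2) + 2))).ncard = d * (d + 2) := by
      rw [Set.ncard_diff (Set.subset_univ _) (Set.toFinite _), Set.ncard_univ,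
        Set.ncard_pair hne]
      simp only [Nat.card_eq_fintype_card, Fintype.card_fin]
      omega
    exact (Set.ncard_le_ncard hsubset (Set.toFinite _)).trans (le_of_eq hcard)
end

section
/- For every graph F with at least one edge there is a constant C = C(F) such that the following holds for all integers n > d ≥ 1: every collection of pairwise vertex-disjoint subgraphs of the complete bipartite graph K_{d, n−d}, each of which is a subdivision of F, covers at most C·d vertices in total. -/
open SimpleGraph

lemma myNcardBiUnionLe {ι β : Type*} [Finite β] (s : Finset ι) (g : ι → Set β) :
    (⋃ i ∈ s, g i).ncard ≤ ∑ i ∈ s, (g i).ncard := by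
  classical
  induction s using Finset.induction_on with
  | empty => simp
  | insert _ _ hx ih =>
      rename_i a t
      rw [Finset.sum_insert hx, Finset.set_biUnion_insert]
      exact le_trans (Set.ncard_union_le _ _) (Nat.add_le_add_left ih _)

lemma myNcardBiUnionGe {ι β : Type*} [Finite β] (s : Finset ι) (g : ι → Set β)
    (h : ∀ i ∈ s, ∀ j ∈ s, i ≠ j → Disjoint (g i) (g j)) :
    ∑ i ∈ s, (g i).ncard ≤ (⋃ i ∈ s, g i).ncard := by
  classical
  induction s using Finset.induction_on with
  | empty => simp
  | insert _ _ hx ih =>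
      rename_i a t
      rw [Finset.sum_insert hx, Finset.set_biUnion_insert]
      have hd : Disjoint (g a) (⋃ i ∈ t, g i) := by
        refine Set.disjoint_iUnion_right.2 fun i => Set.disjoint_iUnion_right.2 fun hi => ?_
        exact h a (Finset.mem_insert_self a t) i (Finset.mem_insert_of_mem hi)
          (by rintro rfl; exact hx hi)
      rw [Set.ncard_union_eq hd (Set.toFinite _) (Set.toFinite _)]
      have := ih (fun i hi j hj hij =>
        h i (Finset.mem_insert_of_mem hi) j (Finset.mem_insert_of_mem hj) hij)
      omega

lemma myAlt {β : Type*} {G : SimpleGraph β} (side : β → Bool)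
    (hG : ∀ ⦃x y : β⦄, G.Adj x y → side x ≠ side y)
    {x y : β} (p : G.Walk x y) :
    p.support.length ≤ 2 * (p.support.countP (fun v => side v)) +
      (if side x then 0 else 1) := by
  induction p with
  | nil =>
      rename_i z
      simp only [Walk.support_nil, List.length_singleton, List.countP_singleton]
      split <;> simp_all
  | cons h q ih =>
      rename_i u v w
      have hne := hG h
      simp only [Walk.support_cons, List.length_cons, List.countP_cons]
      by_cases hu : side u
      · have hv : side v = false := by
          cases hvv : side v
          · rfl
          · exact absurd (by rw [hu, hvv]) hne
        simp only [hu, hv, if_true, decide_eq_true_eq, Bool.false_eq_true, if_false] at ih ⊢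
        omega
      · have hu' : side u = false := by simpa using hu
        have hv : side v = true := by
          cases hvv : side v
          · exact absurd (by rw [hu', hvv]) hne
          · rfl
        simp only [hu', hv, if_true, decide_eq_true_eq, Bool.false_eq_true, if_false] at ih ⊢
        omega


lemma perSubgraph {α : Type*} [Fintype α] (F : SimpleGraph α) (hFe : ∃ a b : α, F.Adj a b)
    {d m : ℕ} (H : (completeBipartiteGraph (Fin d) (Fin m)).Subgraph)
    (hsub : F.IsSubdivision H.coe) :
    1 ≤ (H.verts ∩ Set.range Sum.inl).ncard ∧
    H.verts.ncard ≤ (Fintype.card α + 3 * (Fintype.card α)^2) *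
      (H.verts ∩ Set.range Sum.inl).ncard := by
  classical
  obtain ⟨f, P, hfinj, hpath, hlen, _hrev, _h5, _h6, hcover, _hedge⟩ := hsub
  set L : Set (Fin d ⊕ Fin m) := H.verts ∩ Set.range Sum.inl with hL
  set side : ↥H.verts → Bool := fun v => (v : Fin d ⊕ Fin m).isLeft with hside
  have hG : ∀ ⦃x y : ↥H.verts⦄, H.coe.Adj x y → side x ≠ side y := by
    rintro ⟨xv, hxm⟩ ⟨yv, hym⟩ hxy
    have hK : (completeBipartiteGraph (Fin d) (Fin m)).Adj xv yv := H.adj_sub hxy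
    rcases xv with xv | xv <;> rcases yv with yv | yv <;> simp_all [side]
  -- any adjacency in H.coe yields a left vertex
  have hleft : ∀ ⦃x y : ↥H.verts⦄, H.coe.Adj x y → L.Nonempty := by
    rintro ⟨xv, hxm⟩ ⟨yv, hym⟩ hxy
    have hK : (completeBipartiteGraph (Fin d) (Fin m)).Adj xv yv := H.adj_sub hxy
    rcases xv with xv | xv
    · exact ⟨Sum.inl xv, hxm, ⟨xv, rfl⟩⟩
    · rcases yv with yv | yv
      · exact ⟨Sum.inl yv, hym, ⟨yv, rfl⟩⟩
      · simp at hK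
  have hLpos : 1 ≤ L.ncard := by
    obtain ⟨a, b, hab⟩ := hFe
    obtain ⟨x, y, hadj⟩ : ∃ x y : ↥H.verts, H.coe.Adj x y := by
      have hp : 0 < (P a b hab).length := (hlen a b hab).1
      have hne : (P a b hab).edges ≠ [] := by
        intro hnil
        have := (P a b hab).length_edges
        rw [hnil] at this
        simp at this
        omega
      obtain ⟨e, he⟩ := List.exists_mem_of_ne_nil _ hne
      induction e using Sym2.ind with
      | _ x y => exact ⟨x, y, (P a b hab).adj_of_mem_edges he⟩
    exact (Set.ncard_pos (Set.toFinite _)).2 (hleft hadj)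
  refine ⟨hLpos, ?_⟩
  -- support-count bound for each path
  have hsupl : ∀ u v (h : F.Adj u v),
      ((P u v h).support.countP (fun w => side w)) ≤ L.ncard := by
    intro u v h
    set l := (P u v h).support.filter (fun w => side w) with hl
    have hnd : l.Nodup := ((hpath u v h).support_nodup).filter _
    rw [List.countP_eq_length_filter, ← hl, ← List.toFinset_card_of_nodup hnd]
    set t := l.toFinset.image (Subtype.val) with ht
    have htc : t.card = l.toFinset.card :=
      Finset.card_image_of_injective _ Subtype.val_injective
    have hts : (↑t : Set (Fin d ⊕ Fin m)) ⊆ L := by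
      intro v' hv'
      simp only [ht, Finset.coe_image, Set.mem_image, Finset.mem_coe,
        List.mem_toFinset] at hv'
      obtain ⟨w, hw, rfl⟩ := hv'
      have hwside : side w = true := by
        have := List.of_mem_filter hw
        simpa using this
      obtain ⟨wv, hws⟩ := Sum.isLeft_iff.mp hwside
      exact ⟨w.2, ⟨wv, hws.symm⟩⟩
    calc l.toFinset.card = t.card := htc.symm
      _ = (↑t : Set (Fin d ⊕ Fin m)).ncard := (Set.ncard_coe_finset t).symm
      _ ≤ L.ncard := Set.ncard_le_ncard hts (Set.toFinite _)
  have hsup : ∀ u v (h : F.Adj u v),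
      {w : ↥H.verts | w ∈ (P u v h).support}.ncard ≤ 2 * L.ncard + 1 := by
    intro u v h
    have he : {w : ↥H.verts | w ∈ (P u v h).support} = ↑(P u v h).support.toFinset := by
      ext w; simp
    rw [he, Set.ncard_coe_finset]
    calc (P u v h).support.toFinset.card ≤ (P u v h).support.length :=
          List.toFinset_card_le _
      _ ≤ 2 * ((P u v h).support.countP (fun w => side w)) +
          (if side (f u) then 0 else 1) := myAlt side hG _
      _ ≤ 2 * L.ncard + 1 := by
          have := hsupl u v h
          split <;> omega
  -- covering
  set g : α × α → Set ↥H.verts :=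
    fun i => ⋃ (h : F.Adj i.1 i.2), {w | w ∈ (P i.1 i.2 h).support} with hg
  have hcov : (Set.univ : Set ↥H.verts) ⊆ Set.range f ∪ ⋃ i ∈ (Finset.univ : Finset (α × α)), g i := by
    intro w _
    rcases hcover w with hw | ⟨u, v, h, hw⟩
    · exact Or.inl hw
    · refine Or.inr ?_
      refine Set.mem_biUnion (Finset.mem_univ (u, v)) ?_
      exact Set.mem_iUnion.2 ⟨h, hw⟩
  have hcard : H.verts.ncard = (Set.univ : Set ↥H.verts).ncard := by
    rw [Set.ncard_univ, Nat.card_coe_set_eq]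
  have hrange : (Set.range f).ncard ≤ Fintype.card α := by
    rw [← Set.image_univ]
    calc (f '' Set.univ).ncard ≤ (Set.univ : Set α).ncard :=
          Set.ncard_image_le (Set.toFinite _)
      _ = Fintype.card α := by rw [Set.ncard_univ, Nat.card_eq_fintype_card]
  have hgb : ∀ i : α × α, (g i).ncard ≤ 2 * L.ncard + 1 := by
    intro i
    by_cases h : F.Adj i.1 i.2
    · have : g i = {w | w ∈ (P i.1 i.2 h).support} := by
        simp only [hg]
        exact iSup_pos h
      rw [this]; exact hsup i.1 i.2 h
    · have : g i = ∅ := by simp [hg, h]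
      rw [this]; simp
  have hsum : ∑ i ∈ (Finset.univ : Finset (α × α)), (g i).ncard ≤
      Fintype.card α * Fintype.card α * (2 * L.ncard + 1) := by
    calc ∑ i ∈ (Finset.univ : Finset (α × α)), (g i).ncard
        ≤ (Finset.univ : Finset (α × α)).card * (2 * L.ncard + 1) :=
          Finset.sum_le_card_nsmul _ _ _ (fun i _ => hgb i)
      _ = Fintype.card α * Fintype.card α * (2 * L.ncard + 1) := by
          rw [Finset.card_univ, Fintype.card_prod]
  have hmain : H.verts.ncard ≤ Fintype.card α +
      Fintype.card α * Fintype.card α * (2 * L.ncard + 1) := by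
    calc H.verts.ncard = (Set.univ : Set ↥H.verts).ncard := hcard
      _ ≤ (Set.range f ∪ ⋃ i ∈ (Finset.univ : Finset (α × α)), g i).ncard :=
          Set.ncard_le_ncard hcov (Set.toFinite _)
      _ ≤ (Set.range f).ncard + (⋃ i ∈ (Finset.univ : Finset (α × α)), g i).ncard :=
          Set.ncard_union_le _ _
      _ ≤ Fintype.card α + ∑ i ∈ (Finset.univ : Finset (α × α)), (g i).ncard :=
          Nat.add_le_add hrange (myNcardBiUnionLe _ _)
      _ ≤ Fintype.card α + Fintype.card α * Fintype.card α * (2 * L.ncard + 1) :=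
          Nat.add_le_add_left hsum _
  nlinarith [hLpos, hmain, sq_nonneg (Fintype.card α)]

/-- For every graph `F` with at least one edge there is `C = C(F)` such that, for all
`n > d ≥ 1`, every collection of pairwise vertex-disjoint `F`-subdivisions in the complete
bipartite graph `K_{d, n-d}` covers at most `C · d` vertices in total. -/
theorem stmt_11 {α : Type*} [Fintype α] (F : SimpleGraph α) (hFe : ∃ a b : α, F.Adj a b) :
    ∃ C : ℕ, ∀ n d : ℕ, 1 ≤ d → d < n →
      ∀ 𝒞 : Set (completeBipartiteGraph (Fin d) (Fin (n - d))).Subgraph,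
        (∀ H ∈ 𝒞, F.IsSubdivision H.coe) →
        (𝒞.Pairwise fun H₁ H₂ => Disjoint H₁.verts H₂.verts) →
        (⋃ H ∈ 𝒞, H.verts).ncard ≤ C * d := by
  classical
  refine ⟨Fintype.card α + 3 * (Fintype.card α)^2, ?_⟩
  intro n d _hd _hdn 𝒞 hsub hdisj
  set C := Fintype.card α + 3 * (Fintype.card α)^2 with hC
  set V := Fin d ⊕ Fin (n - d)
  set left : Set V := Set.range Sum.inl with hleft
  have hpers := fun H (hH : H ∈ 𝒞) => perSubgraph F hFe H (hsub H hH)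
  have hne : ∀ H ∈ 𝒞, H.verts.Nonempty := by
    intro H hH
    have h1 := (hpers H hH).1
    have : (H.verts ∩ left).Nonempty :=
      (Set.ncard_pos (Set.toFinite _)).1 h1
    exact this.mono Set.inter_subset_left
  have hfin : 𝒞.Finite := by
    have hinj : Set.InjOn SimpleGraph.Subgraph.verts 𝒞 := by
      intro H₁ h₁ H₂ h₂ hv
      by_contra hne'
      have hd : Disjoint H₁.verts H₂.verts := hdisj h₁ h₂ hne'
      rw [hv, disjoint_self] at hd
      exact absurd (hne H₂ h₂) (by rw [hd]; exact Set.not_nonempty_empty)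
    exact Set.Finite.of_finite_image (Set.toFinite _) hinj
  have huneq : (⋃ H ∈ 𝒞, H.verts) = ⋃ H ∈ hfin.toFinset, H.verts := by
    ext v; simp [Set.Finite.mem_toFinset]
  rw [huneq]
  have hmem : ∀ H ∈ hfin.toFinset, H ∈ 𝒞 := fun H hH => (Set.Finite.mem_toFinset hfin).1 hH
  calc (⋃ H ∈ hfin.toFinset, H.verts).ncard
      ≤ ∑ H ∈ hfin.toFinset, H.verts.ncard := myNcardBiUnionLe _ _
    _ ≤ ∑ H ∈ hfin.toFinset, C * (H.verts ∩ left).ncard := by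
        refine Finset.sum_le_sum fun H hH => ?_
        exact (hpers H (hmem H hH)).2
    _ = C * ∑ H ∈ hfin.toFinset, (H.verts ∩ left).ncard := by
        rw [Finset.mul_sum]
    _ ≤ C * (⋃ H ∈ hfin.toFinset, (H.verts ∩ left)).ncard := by
        refine Nat.mul_le_mul_left _ (myNcardBiUnionGe _ _ ?_)
        intro H₁ h₁ H₂ h₂ hne'
        exact Disjoint.mono Set.inter_subset_left Set.inter_subset_left
          (hdisj (hmem H₁ h₁) (hmem H₂ h₂) hne')
    _ ≤ C * left.ncard := by
        refine Nat.mul_le_mul_left _ (Set.ncard_le_ncard ?_ (Set.toFinite _))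
        exact Set.iUnion₂_subset fun H _ => Set.inter_subset_right
    _ = C * d := by
        rw [hleft, ← Set.image_univ, Set.ncard_image_of_injective _ Sum.inl_injective,
          Set.ncard_univ, Nat.card_eq_fintype_card, Fintype.card_fin]
end
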